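/- arXiv:2102.08815 — 8 statements merged into one kernel-verified Lean document; each statement's English description precedes it below -/
import Mathlib

section
/- For any Dyck path λ (a south-east lattice path from (0,N) to (N,0) lying weakly below the diagonal), let r_i(λ) be the area contribution of row i (the distance from the i-th south step of λ to the i-th south step of the staircase path, rows numbered north to south) and c_i(λ) the area contribution of column i (numbered right to left). Then the products ∏_{1<i≤N, r_i(λ)=r_{i-1}(λ)+1} (1 + z·t^{-r_i(λ)}) and ∏_{1<i≤N, c_i(λ)=c_{i-1}(λ)+1} (1 + z·t^{-c_i(λ)}) are equal as polynomials in z with coefficients in Laurent polynomials in t. -/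
/-- Positions (0-indexed) of the south steps (`true`) in the word `w`. -/
def truePositions (w : List Bool) : List ℕ :=
  (List.range w.length).filter (fun k => w.getD k false = true)

/-- The area contribution `r_i(λ)` of row `i` (1-indexed, north to south): the distance
from the `i`-th south step of `λ` to the `i`-th south step of the staircase path. -/
def rstat (w : List Bool) (i : ℕ) : ℕ :=
  2 * (i - 1) - (truePositions w).getD (i - 1) 0

/-- The transpose path: reflect about the diagonal, i.e. reverse the word and
swap south and east steps. -/
def transposeWord (w : List Bool) : List Bool := (w.reverse).map (fun b => !b)

/-- The area contribution `c_i(λ) = r_i(λ*)` of column `i` (numbered right to left). -/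
def cstat (w : List Bool) (i : ℕ) : ℕ := rstat (transposeWord w) i

/-- `w` is (the word of south (`true`) and east (`false`) steps of) a Dyck path from
`(0,N)` to `(N,0)` lying weakly below the diagonal. -/
def IsDyck (N : ℕ) (w : List Bool) : Prop :=
  w.length = 2 * N ∧ w.count true = N ∧
    ∀ k, ((w.take k).count false) ≤ ((w.take k).count true)

/-!
Encode the path as a word in south (`true`) and east (`false`) steps and let the height after
`k` steps be `#S - #E`; the path is Dyck iff all heights are nonnegative. The row statistic `r_i`
is the height just before the `i`-th south step, and `r_i = r_{i-1} + 1` exactly when the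
`(i-1)`-st and `i`-th south steps are adjacent. So the left product runs over the heights of the
double south steps `SS` of the word. Transposition reverses the word and swaps the letters, so
the right product runs over the heights of the double east steps `EE`.

For every level `h` the path crosses up through `h` as often as it crosses down. An up-crossing
is preceded by an `S` (an `SS` at height `h`), by an `E` (a valley at `h`), or by nothing; a
down-crossing is followed by an `E`, by an `S` (a valley) or by nothing. A Dyck path starts with
`S` and ends with `E`, so the number of `SS` at height `h` equals the number of `EE` at height `h`.
-/

open Finset

section

variable {w u : List Bool} {b c : Bool} {N j k : ℕ}

lemma truePositions_cons :
    truePositions (b :: w) = (if b then [0] else []) ++ (truePositions w).map (· + 1) := by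
  have h : ((List.range w.length).map Nat.succ).filter (fun k => (b :: w).getD k false) =
      ((List.range w.length).filter (fun k => w.getD k false)).map (· + 1) := by
    rw [List.filter_map]; rfl
  cases b <;> simpa [truePositions, List.range_succ_eq_map, List.filter_cons] using h

lemma length_truePositions : (truePositions w).length = w.count true := by
  induction w with
  | nil => rfl
  | cons b w ih => cases b <;> simp [truePositions_cons, ih]

lemma count_take_succ_of_getD_eq_true (hk : k < w.length) (hwk : w.getD k false = true) :
    (w.take (k + 1)).count true = (w.take k).count true + 1 := by
  rw [List.getD_eq_getElem _ _ hk] at hwk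
  simp [List.take_add_one, List.getElem?_eq_getElem hk, hwk]

lemma count_take_lt_count (hk : k < w.length) (hwk : w.getD k false = true) :
    (w.take k).count true < w.count true := by
  have := (List.take_sublist (k + 1) w).count_le true
  rw [count_take_succ_of_getD_eq_true hk hwk] at this
  omega

/-- The (0-indexed) position of the `(j+1)`-st south step; `rstat w (j+1)` unfolds to
`2 * j - southPos w j`. -/
def southPos (w : List Bool) (j : ℕ) : ℕ := (truePositions w).getD j 0

lemma southPos_cons_true_succ (hj : j < w.count true) :
    southPos (true :: w) (j + 1) = southPos w j + 1 := by
  have hj' : j < (truePositions w).length := by rwa [length_truePositions]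
  simp [southPos, truePositions_cons, List.getElem?_eq_getElem hj']

lemma southPos_cons_false (hj : j < w.count true) :
    southPos (false :: w) j = southPos w j + 1 := by
  have hj' : j < (truePositions w).length := by rwa [length_truePositions]
  simp [southPos, truePositions_cons, List.getElem?_eq_getElem hj']

lemma southPos_mem_truePositions (hj : j < w.count true) : southPos w j ∈ truePositions w := by
  rw [southPos, List.getD_eq_getElem _ _ (by rwa [length_truePositions])]
  exact List.getElem_mem _

lemma southPos_lt_length (hj : j < w.count true) : southPos w j < w.length := by
  simpa using (List.mem_filter.1 (southPos_mem_truePositions hj)).1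

lemma getD_southPos (hj : j < w.count true) : w.getD (southPos w j) false = true := by
  simpa using (List.mem_filter.1 (southPos_mem_truePositions hj)).2

lemma count_take_southPos (hj : j < w.count true) :
    (w.take (southPos w j)).count true = j := by
  induction w generalizing j with
  | nil => simp at hj
  | cons b w ih =>
    cases b with
    | false =>
      rw [List.count_cons_of_ne (by simp)] at hj
      simp [southPos_cons_false hj, ih hj]
    | true =>
      cases j with
      | zero => simp [southPos, truePositions_cons]
      | succ j =>
        have hj : j < w.count true := by simpa using hj
        simp [southPos_cons_true_succ hj, ih hj]

lemma southPos_count_take (hk : k < w.length) (hwk : w.getD k false = true) :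
    southPos w ((w.take k).count true) = k := by
  induction w generalizing k with
  | nil => simp at hk
  | cons b w ih =>
    cases k with
    | zero =>
      obtain rfl : b = true := by simpa using hwk
      simp [southPos, truePositions_cons]
    | succ k =>
      have hlt : k < w.length := by simpa using hk
      have htrue : w.getD k false = true := by simpa using hwk
      have hcount := count_take_lt_count hlt htrue
      cases b
      · simp [southPos_cons_false hcount, ih hlt htrue]
      · simp [southPos_cons_true_succ hcount, ih hlt htrue]

def height (w : List Bool) (k : ℕ) : ℤ := (w.take k).count true - (w.take k).count false

lemma height_append_singleton_of_le (b : Bool) (hk : k ≤ u.length) :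
    height (u ++ [b]) k = height u k := by
  rw [height, height, List.take_append_of_le_length hk]

lemma height_append_singleton_length (b : Bool) :
    height (u ++ [b]) (u.length + 1) = height u u.length + if b then 1 else -1 := by
  simp only [height, List.take_of_length_le (by simp : (u ++ [b]).length ≤ u.length + 1),
    List.take_length]
  cases b <;> simp [List.count_append] <;> ring

lemma height_southPos (hj : j < w.count true) :
    height w (southPos w j) = 2 * j - southPos w j := by
  have hlen : (w.take (southPos w j)).length = southPos w j :=
    List.length_take_of_le (southPos_lt_length hj).le
  have := List.count_true_add_count_false (w.take (southPos w j))
  have := count_take_southPos hj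
  rw [height]
  omega

lemma height_transposeWord :
    height (transposeWord w) k = height w (w.length - k) - height w w.length := by
  have hcount (c : Bool) : ((transposeWord w).take k).count c =
      w.count (!c) - (w.take (w.length - k)).count (!c) := by
    have := List.count_append (a := !c) (l₁ := w.take (w.length - k))
      (l₂ := w.drop (w.length - k))
    rw [List.take_append_drop] at this
    rw [transposeWord, ← List.map_take, List.take_reverse, ← Bool.not_not c,
      List.count_map_of_injective _ _ Bool.not_injective, List.count_reverse, Bool.not_not]
    omega
  have hle (c : Bool) : (w.take (w.length - k)).count c ≤ w.count c :=
    (List.take_sublist _ _).count_le c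
  simp only [height, hcount, List.take_length]
  push_cast [hle]
  simp only [Bool.not_true, Bool.not_false]
  ring

lemma isDyck_iff_height :
    IsDyck N w ↔ w.length = 2 * N ∧ w.count true = N ∧ ∀ k, 0 ≤ height w k := by
  simp only [IsDyck, height, sub_nonneg, Nat.cast_le]

namespace IsDyck

lemma height_nonneg (hw : IsDyck N w) (k : ℕ) : 0 ≤ height w k :=
  (isDyck_iff_height.1 hw).2.2 k

lemma height_length (hw : IsDyck N w) : height w w.length = 0 := by
  have := List.count_true_add_count_false w
  have := hw.1
  have := hw.2.1
  rw [height, List.take_length]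
  omega

lemma transpose (hw : IsDyck N w) : IsDyck N (transposeWord w) := by
  refine isDyck_iff_height.2 ⟨by simpa [_root_.transposeWord] using hw.1, ?_, fun k => ?_⟩
  · rw [_root_.transposeWord, ← Bool.not_false,
      List.count_map_of_injective _ _ Bool.not_injective, List.count_reverse]
    have := List.count_true_add_count_false w
    have := hw.1
    have := hw.2.1
    omega
  · rw [height_transposeWord, hw.height_length, sub_zero]
    exact hw.height_nonneg _

lemma head?_ne_some_false (hw : IsDyck N w) : w.head? ≠ some false := by
  intro h
  obtain ⟨v, rfl⟩ := List.head?_eq_some_iff.1 h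
  have := hw.height_nonneg 1
  simp [height] at this

lemma getLast?_ne_some_true (hw : IsDyck N w) : w.getLast? ≠ some true := by
  intro h
  obtain ⟨v, rfl⟩ := List.getLast?_eq_some_iff.1 h
  have hlast := height_append_singleton_length (u := v) true
  have hlen : (v ++ [true]).length = v.length + 1 := by simp
  rw [← hlen, hw.height_length, ← height_append_singleton_of_le true le_rfl] at hlast
  have := hw.height_nonneg v.length
  simp at hlast
  omega

end IsDyck

def doubleSteps (c : Bool) (w : List Bool) : Finset ℕ :=
  (range w.length).filter (fun k => 0 < k ∧ w.getD (k - 1) false = c ∧ w.getD k false = c)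

lemma mem_doubleSteps :
    k ∈ doubleSteps c w ↔
      k < w.length ∧ 0 < k ∧ w.getD (k - 1) false = c ∧ w.getD k false = c := by
  simp [doubleSteps]

lemma getLast?_eq_some_iff_getD :
    u.getLast? = some c ↔ 0 < u.length ∧ u.getD (u.length - 1) false = c := by
  rcases u.eq_nil_or_concat with rfl | ⟨v, a, rfl⟩
  · simp
  · simp [List.getD_eq_getElem?_getD]

lemma card_doubleSteps_append_singleton (h : ℤ) :
    #{k ∈ doubleSteps c (u ++ [b]) | height (u ++ [b]) k = h} =
      #{k ∈ doubleSteps c u | height u k = h} +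
        if u.getLast? = some c ∧ b = c ∧ height u u.length = h then 1 else 0 := by
  simp only [doubleSteps, filter_filter, card_filter, List.length_append, List.length_singleton,
    sum_range_succ]
  congr 1
  · refine sum_congr rfl fun k hk => ?_
    rw [mem_range] at hk
    rw [height_append_singleton_of_le b hk.le, List.getD_append _ _ _ _ hk,
      List.getD_append _ _ _ _ (by omega : k - 1 < u.length)]
  · refine if_congr ?_ rfl rfl
    rw [height_append_singleton_of_le b le_rfl, getLast?_eq_some_iff_getD]
    by_cases hu : 0 < u.length <;> simp [hu, and_assoc]

lemma card_doubleSteps_true_sub_false (h : ℤ) :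
    (#{k ∈ doubleSteps true w | height w k = h} : ℤ) -
        #{k ∈ doubleSteps false w | height w k = h} =
      (if h ≤ height w w.length then 1 else 0) - (if h ≤ 0 then 1 else 0) +
        (if w.head? = some false ∧ h = 0 then 1 else 0) -
        (if w.getLast? = some true ∧ h = height w w.length then 1 else 0) := by
  induction w using List.reverseRecOn with
  | nil => simp [doubleSteps, height]
  | append_singleton u b ih =>
    rw [card_doubleSteps_append_singleton, card_doubleSteps_append_singleton,
      List.length_append, List.length_singleton, height_append_singleton_length]
    rcases u.eq_nil_or_concat with rfl | ⟨v, a, rfl⟩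
    · cases b <;> simp [doubleSteps, height] <;> split_ifs <;> omega
    · simp only [List.concat_eq_append, List.getLast?_concat, List.head?_append,
        List.head?_append_of_ne_nil _ (List.concat_ne_nil a v)] at ih ⊢
      push_cast
      cases a <;> cases b <;> simp at ih ⊢ <;> split_ifs at ih ⊢ <;> omega

lemma southPos_succ_mem_doubleSteps_iff (hj : j + 1 < w.count true) :
    southPos w (j + 1) ∈ doubleSteps true w ↔ southPos w (j + 1) = southPos w j + 1 := by
  have hpos : j + 1 ≤ southPos w (j + 1) := by
    have := List.count_le_length (l := w.take (southPos w (j + 1))) (a := true)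
    rw [count_take_southPos hj, List.length_take] at this
    omega
  constructor
  · intro hmem
    obtain ⟨hlt, -, hprev, -⟩ := mem_doubleSteps.1 hmem
    have hsucc := count_take_succ_of_getD_eq_true (by omega) hprev
    rw [Nat.sub_add_cancel (by omega), count_take_southPos hj] at hsucc
    have := southPos_count_take (by omega) hprev
    rw [← Nat.add_right_cancel hsucc] at this
    omega
  · intro hsucc
    refine mem_doubleSteps.2 ⟨southPos_lt_length hj, by omega, ?_, getD_southPos hj⟩
    rw [hsucc, Nat.add_sub_cancel]
    exact getD_southPos (by omega)

lemma getD_transposeWord (hk : k < w.length) :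
    (transposeWord w).getD k false = !w.getD (w.length - 1 - k) false := by
  rw [List.getD_eq_getElem _ _ (by simpa [transposeWord] using hk),
    List.getD_eq_getElem _ _ (by omega)]
  simp [transposeWord, List.getElem_reverse]

lemma mem_doubleSteps_true_transposeWord :
    k ∈ doubleSteps true (transposeWord w) ↔
      k < w.length ∧ w.length - k ∈ doubleSteps false w := by
  have hlen : (transposeWord w).length = w.length := by simp [transposeWord]
  simp only [mem_doubleSteps, hlen]
  constructor
  · rintro ⟨hlt, hpos, hprev, hcur⟩
    rw [getD_transposeWord (by omega)] at hprev hcur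
    refine ⟨hlt, by omega, by omega, ?_, ?_⟩
    · rw [show w.length - k - 1 = w.length - 1 - k by omega]
      simpa using hcur
    · rw [show w.length - k = w.length - 1 - (k - 1) by omega]
      simpa using hprev
  · rintro ⟨hlt, hlt', hpos, hprev, hcur⟩
    refine ⟨hlt, by omega, ?_, ?_⟩
    · rw [getD_transposeWord (by omega), show w.length - 1 - (k - 1) = w.length - k by omega,
        hcur, Bool.not_false]
    · rw [getD_transposeWord hlt, show w.length - 1 - k = w.length - k - 1 by omega,
        hprev, Bool.not_false]

namespace IsDyck

lemma card_doubleSteps_true_eq_false (hw : IsDyck N w) (h : ℤ) :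
    #{k ∈ doubleSteps true w | height w k = h} =
      #{k ∈ doubleSteps false w | height w k = h} := by
  have := card_doubleSteps_true_sub_false (w := w) h
  simp only [hw.height_length, hw.head?_ne_some_false, hw.getLast?_ne_some_true, false_and,
    if_false] at this
  omega

variable {M : Type*} [CommMonoid M]

lemma prod_doubleSteps_true_eq_false (hw : IsDyck N w) (F : ℤ → M) :
    ∏ k ∈ doubleSteps true w, F (height w k) =
      ∏ k ∈ doubleSteps false w, F (height w k) := by
  have hmap : (doubleSteps true w).val.map (height w) =
      (doubleSteps false w).val.map (height w) := by
    ext h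
    simpa [Multiset.count_map, Finset.card_def, eq_comm] using
      hw.card_doubleSteps_true_eq_false h
  simpa [Multiset.map_map, Finset.prod_map_val] using congr_arg (fun s => (s.map F).prod) hmap

lemma prod_doubleSteps_transpose (hw : IsDyck N w) (F : ℤ → M) :
    ∏ k ∈ doubleSteps true (transposeWord w), F (height (transposeWord w) k) =
      ∏ k ∈ doubleSteps false w, F (height w k) := by
  apply prod_nbij' (w.length - ·) (w.length - ·)
  · intro k hk
    exact (mem_doubleSteps_true_transposeWord.1 hk).2
  · intro k hk
    obtain ⟨hlt, hpos, -⟩ := mem_doubleSteps.1 hk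
    rw [mem_doubleSteps_true_transposeWord, Nat.sub_sub_self hlt.le]
    exact ⟨Nat.sub_lt (hpos.trans hlt) hpos, hk⟩
  · intro k hk
    exact Nat.sub_sub_self (mem_doubleSteps_true_transposeWord.1 hk).1.le
  · intro k hk
    exact Nat.sub_sub_self (mem_doubleSteps.1 hk).1.le
  · intro k _
    rw [height_transposeWord, hw.height_length, sub_zero]

lemma rstat_succ (hw : IsDyck N w) (hj : j < N) :
    (rstat w (j + 1) : ℤ) = height w (southPos w j) := by
  have hheight := height_southPos (w := w) (hw.2.1 ▸ hj)
  have := hw.height_nonneg (southPos w j)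
  change ((2 * (j + 1 - 1) - southPos w j : ℕ) : ℤ) = _
  omega

lemma rstat_rise_iff (hw : IsDyck N w) (hj : j + 1 < N) :
    rstat w (j + 2) = rstat w (j + 1) + 1 ↔ southPos w (j + 1) = southPos w j + 1 := by
  have hcount := hw.2.1
  have : (rstat w (j + 2) : ℤ) = height w (southPos w (j + 1)) := hw.rstat_succ hj
  have := hw.rstat_succ (j := j) (by omega)
  have := height_southPos (w := w) (j := j + 1) (by omega)
  have := height_southPos (w := w) (j := j) (by omega)
  omega

lemma prod_rises (hw : IsDyck N w) (F : ℤ → M) :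
    ∏ i ∈ (Icc 2 N).filter (fun i => rstat w i = rstat w (i - 1) + 1), F (rstat w i) =
      ∏ k ∈ doubleSteps true w, F (height w k) := by
  have hcount := hw.2.1
  apply prod_nbij' (fun i => southPos w (i - 1)) (fun k => (w.take k).count true + 1)
  · intro i hi
    obtain ⟨⟨h2, hN⟩, hrise⟩ := by simpa only [mem_filter, mem_Icc] using hi
    obtain ⟨j, rfl⟩ : ∃ j, i = j + 2 := ⟨i - 2, by omega⟩
    exact (southPos_succ_mem_doubleSteps_iff (by omega)).2 ((hw.rstat_rise_iff (by omega)).1 hrise)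
  · intro k hk
    obtain ⟨hlt, hpos, hprev, hcur⟩ := mem_doubleSteps.1 hk
    have hsucc := count_take_succ_of_getD_eq_true (by omega) hprev
    rw [Nat.sub_add_cancel hpos] at hsucc
    set j := (w.take (k - 1)).count true
    have hjN : j + 1 < N := hcount ▸ hsucc ▸ count_take_lt_count hlt hcur
    have hp : southPos w (j + 1) = k := hsucc ▸ southPos_count_take hlt hcur
    rw [hsucc, mem_filter, mem_Icc]
    refine ⟨⟨by omega, by omega⟩, ?_⟩
    exact (hw.rstat_rise_iff hjN).2 ((southPos_succ_mem_doubleSteps_iff (by omega)).1 (hp ▸ hk))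
  · intro i hi
    simp only [mem_filter, mem_Icc] at hi
    simp only [count_take_southPos (by omega : i - 1 < w.count true)]
    omega
  · intro k hk
    exact southPos_count_take (mem_doubleSteps.1 hk).1 (mem_doubleSteps.1 hk).2.2.2
  · intro i hi
    simp only [mem_filter, mem_Icc] at hi
    obtain ⟨j, rfl⟩ : ∃ j, i = j + 1 := ⟨i - 1, by omega⟩
    rw [hw.rstat_succ (by omega), Nat.add_sub_cancel]

end IsDyck

end

theorem extended_delta_stmt0 (N : ℕ) (w : List Bool) (hw : IsDyck N w) :
    (∏ i ∈ (Finset.Icc 2 N).filter (fun i => rstat w i = rstat w (i - 1) + 1),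
        (1 + Polynomial.C (LaurentPolynomial.T (R := ℚ) (-(rstat w i : ℤ))) * Polynomial.X)) =
    (∏ i ∈ (Finset.Icc 2 N).filter (fun i => cstat w i = cstat w (i - 1) + 1),
        (1 + Polynomial.C (LaurentPolynomial.T (R := ℚ) (-(cstat w i : ℤ))) * Polynomial.X)) := by
  let F : ℤ → Polynomial (LaurentPolynomial ℚ) :=
    fun r => 1 + Polynomial.C (LaurentPolynomial.T (-r)) * Polynomial.X
  calc _ = ∏ k ∈ doubleSteps true w, F (height w k) := hw.prod_rises F
    _ = ∏ k ∈ doubleSteps false w, F (height w k) := hw.prod_doubleSteps_true_eq_false F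
    _ = ∏ k ∈ doubleSteps true (transposeWord w), F (height (transposeWord w) k) :=
      (hw.prod_doubleSteps_transpose F).symm
    _ = _ := (hw.transpose.prod_rises F).symm
end

section
/- Let H^m_{q,t} denote the two-parameter symmetrization operator on Laurent polynomials in x_1,…,x_m defined by H^m_{q,t}(φ(x)) = Σ_{w ∈ S_m} w( φ(x) ∏_{i<j} (1 − qt x_i/x_j) / ∏_{i<j} ((1 − x_j/x_i)(1 − q x_i/x_j)(1 − t x_i/x_j)) ). If f(z_1,…,z_m) is a rational function antisymmetric in z_i and z_{i+1}, then H^m_{q,t}( Ω[M z_i/z_{i+1}] · f(z) ) = 0, where Ω[Mz] = (1−qz)(1−tz)/((1−z)(1−qtz)). -/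
/-!
The kernel of `H^m_{q,t}` is the product over the pairs `i < j` of `pairKernel q t (xᵢ/xⱼ)`.
The adjacent transposition `s = (i₀ i₁)` permutes the pairs other than `(i₀, i₁)` and sends
`(i₀, i₁)` to `(i₁, i₀)`. Multiplying the factor of that pair by `Ω[M z]` leaves
`1/((1 - z)(1 - z⁻¹))`, which is invariant under `z ↦ z⁻¹`. Hence the symmetrand is, like `f`,
antisymmetric under `s`, and the terms `w` and `w s` of the symmetrization cancel.
-/

open Finset

section Pairs

variable {α : Type*} [LinearOrder α]

theorem swap_apply_lt_swap_apply_of_covBy {a b i j : α} (hab : a ⋖ b) (hij : i < j)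
    (hne : (i, j) ≠ (a, b)) : Equiv.swap a b i < Equiv.swap a b j := by
  rcases eq_or_ne i a with rfl | hia
  · have hjb : j ≠ b := fun h => hne (by rw [h])
    rw [Equiv.swap_apply_left, Equiv.swap_apply_of_ne_of_ne hij.ne' hjb]
    exact (hab.ge_of_gt hij).lt_of_ne hjb.symm
  rcases eq_or_ne i b with rfl | hib
  · have hja : j ≠ a := (hab.lt.trans hij).ne'
    rw [Equiv.swap_apply_right, Equiv.swap_apply_of_ne_of_ne hja hij.ne']
    exact hab.lt.trans hij
  rw [Equiv.swap_apply_of_ne_of_ne hia hib]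
  rcases eq_or_ne j a with rfl | hja
  · simpa using hij.trans hab.lt
  rcases eq_or_ne j b with rfl | hjb
  · simpa using (hab.le_of_lt hij).lt_of_ne hia
  simpa [Equiv.swap_apply_of_ne_of_ne hja hjb] using hij

def ltPairs (α : Type*) [LinearOrder α] [Fintype α] : Finset (α × α) :=
  univ.filter fun p => p.1 < p.2

variable [Fintype α]

@[simp]
theorem mem_ltPairs {p : α × α} : p ∈ ltPairs α ↔ p.1 < p.2 := by
  simp [ltPairs]

theorem prod_ltPairs_swap_of_covBy {M : Type*} [CommMonoid M] {a b : α} (hab : a ⋖ b)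
    (g : α → α → M) :
    ∏ p ∈ ltPairs α, g (Equiv.swap a b p.1) (Equiv.swap a b p.2) =
      g b a * ∏ p ∈ (ltPairs α).erase (a, b), g p.1 p.2 := by
  set s := Equiv.swap a b
  have hmaps : ∀ p ∈ (ltPairs α).erase (a, b), (s p.1, s p.2) ∈ (ltPairs α).erase (a, b) := by
    rintro ⟨i, j⟩ hp
    simp only [mem_erase, mem_ltPairs] at hp ⊢
    refine ⟨fun h => ?_, swap_apply_lt_swap_apply_of_covBy hab hp.2 hp.1⟩
    simp only [Prod.mk.injEq, Equiv.swap_apply_eq_iff, s, Equiv.swap_apply_left,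
      Equiv.swap_apply_right] at h
    exact lt_asymm hab.lt (h.1 ▸ h.2 ▸ hp.2)
  have hinv : ∀ p : α × α, (s (s p.1), s (s p.2)) = p := fun p => by simp [s]
  rw [← mul_prod_erase _ _ (mem_ltPairs (p := (a, b)) |>.mpr hab.lt), Equiv.swap_apply_left,
    Equiv.swap_apply_right]
  exact congrArg _ (prod_nbij' _ _ hmaps hmaps (fun p _ => hinv p) (fun p _ => hinv p)
    (fun _ _ => rfl))

end Pairs

section Kernel

variable {F : Type*} [Field F]

/-- `Ω[M z]` for `M = (1 - q)(1 - t)`. -/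
def omegaM (q t z : F) : F := (1 - q * z) * (1 - t * z) / ((1 - z) * (1 - q * t * z))

/-- The factor of the kernel of `H^m_{q,t}` belonging to a pair `i < j`, at `z = xᵢ/xⱼ`. -/
def pairKernel (q t z : F) : F := (1 - q * t * z) / ((1 - z⁻¹) * (1 - q * z) * (1 - t * z))

def IsQTGeneric (q t z : F) : Prop := 1 - q * z ≠ 0 ∧ 1 - t * z ≠ 0 ∧ 1 - q * t * z ≠ 0

theorem omegaM_mul_pairKernel {q t z : F} (hz : IsQTGeneric q t z) :
    omegaM q t z * pairKernel q t z = ((1 - z) * (1 - z⁻¹))⁻¹ := by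
  obtain ⟨hq, ht, hqt⟩ := hz
  calc omegaM q t z * pairKernel q t z
      = ((1 - q * z) * (1 - t * z) * (1 - q * t * z)) /
          ((1 - q * z) * (1 - t * z) * (1 - q * t * z) * ((1 - z) * (1 - z⁻¹))) := by
        unfold omegaM pairKernel; rw [div_mul_div_comm]; congr 1; ring
    _ = ((1 - z) * (1 - z⁻¹))⁻¹ := div_mul_cancel_left₀ (by simp [*]) _

theorem omegaM_mul_pairKernel_inv {q t z : F} (hz : IsQTGeneric q t z)
    (hz' : IsQTGeneric q t z⁻¹) :
    omegaM q t z⁻¹ * pairKernel q t z⁻¹ = omegaM q t z * pairKernel q t z := by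
  rw [omegaM_mul_pairKernel hz, omegaM_mul_pairKernel hz', inv_inv, mul_comm]

variable {K R : Type*} [Field K] [FunLike R F K] [RingHomClass R F K]

theorem map_omegaM (e : R) (q t z : F) : e (omegaM q t z) = omegaM (e q) (e t) (e z) := by
  simp [omegaM, map_div₀]

theorem map_pairKernel (e : R) (q t z : F) :
    e (pairKernel q t z) = pairKernel (e q) (e t) (e z) := by
  simp [pairKernel, map_div₀]

end Kernel

theorem omegaM_mul_prod_pairKernel_antisymm {α F : Type*} [LinearOrder α] [Fintype α]
    [Field F] {a b : α} (hab : a ⋖ b) (e : F →+* F) (x : α → F) {q t f : F}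
    (hx : ∀ i, e (x i) = x (Equiv.swap a b i)) (hq : e q = q) (ht : e t = t) (hf : e f = -f)
    (hab_generic : IsQTGeneric q t (x a / x b)) (hba_generic : IsQTGeneric q t (x b / x a)) :
    e (omegaM q t (x a / x b) * f * ∏ p ∈ ltPairs α, pairKernel q t (x p.1 / x p.2)) =
      -(omegaM q t (x a / x b) * f * ∏ p ∈ ltPairs α, pairKernel q t (x p.1 / x p.2)) := by
  have hsym := omegaM_mul_pairKernel_inv hab_generic (by rwa [inv_div])
  rw [inv_div] at hsym
  simp only [map_mul, map_prod, map_omegaM, map_pairKernel, map_div₀, hx, hq, ht, hf,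
    Equiv.swap_apply_left, Equiv.swap_apply_right]
  rw [prod_ltPairs_swap_of_covBy hab (fun i j => pairKernel q t (x i / x j)),
    ← mul_prod_erase _ _ (mem_ltPairs (p := (a, b)) |>.mpr hab.lt)]
  linear_combination
    (-f * ∏ p ∈ (ltPairs α).erase (a, b), pairKernel q t (x p.1 / x p.2)) * hsym

theorem sum_map_eq_zero_of_map_eq_neg {G R : Type*} [Group G] [Fintype G] [Ring R]
    (φ : G →* (R ≃+* R)) {s : G} (hs : s * s = 1) (hs1 : s ≠ 1) {y : R} (hy : φ s y = -y) :
    ∑ w, φ w y = 0 := by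
  refine sum_ninvolution (· * s) (fun w => ?_) (fun w _ h => hs1 (mul_eq_left.mp h))
    (fun _ => mem_univ _) (fun w => by rw [mul_assoc, hs, mul_one])
  rw [map_mul, RingAut.mul_apply, hy, map_neg, add_neg_cancel]

/-- In the field `F` of rational functions in `x 0, …, x (m-1)`, with the symmetric
group acting by permuting the variables (`φ`), the two-parameter symmetrization
operator `H^m_{q,t}` kills `Ω[M x_{i₀}/x_{i₀+1}] · f` whenever `f` is antisymmetric
in `x_{i₀}` and `x_{i₀+1}`.  Here `Ω[Mz] = (1−qz)(1−tz)/((1−z)(1−qtz))` and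
`H^m_{q,t}(φ(x)) = Σ_{w∈S_m} w(φ(x) ∏_{i<j}(1−qt xᵢ/xⱼ) /
∏_{i<j}((1−xⱼ/xᵢ)(1−q xᵢ/xⱼ)(1−t xᵢ/xⱼ)))`. -/
theorem extended_delta_stmt5 {F : Type*} [Field F] (m : ℕ)
    (φ : Equiv.Perm (Fin m) →* (F ≃+* F)) (x : Fin m → F) (q t : F)
    (hx : ∀ (σ : Equiv.Perm (Fin m)) (i : Fin m), φ σ (x i) = x (σ i))
    (hq : ∀ σ, φ σ q = q) (ht : ∀ σ, φ σ t = t)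
    (hnz : ∀ i j : Fin m, i ≠ j →
      x j ≠ 0 ∧ (1 - x j / x i) ≠ 0 ∧ (1 - q * (x i / x j)) ≠ 0 ∧
      (1 - t * (x i / x j)) ≠ 0 ∧ (1 - q * t * (x i / x j)) ≠ 0)
    (i₀ i₁ : Fin m) (h01 : (i₁ : ℕ) = (i₀ : ℕ) + 1)
    (f : F) (hf : φ (Equiv.swap i₀ i₁) f = -f) :
    ∑ w : Equiv.Perm (Fin m),
      φ w (((1 - q * (x i₀ / x i₁)) * (1 - t * (x i₀ / x i₁)) /
              ((1 - x i₀ / x i₁) * (1 - q * t * (x i₀ / x i₁)))) * f *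
        (∏ p ∈ Finset.univ.filter (fun p : Fin m × Fin m => p.1 < p.2),
            (1 - q * t * (x p.1 / x p.2))) /
        (∏ p ∈ Finset.univ.filter (fun p : Fin m × Fin m => p.1 < p.2),
            ((1 - x p.2 / x p.1) * (1 - q * (x p.1 / x p.2)) *
              (1 - t * (x p.1 / x p.2))))) = 0 := by
  have hcov : i₀ ⋖ i₁ := Fin.covBy_iff.mpr (Nat.covBy_iff_add_one_eq.mpr h01.symm)
  have generic : ∀ i j, i ≠ j → IsQTGeneric q t (x i / x j) := fun i j hij =>
    let ⟨_, _, hq', ht', hqt'⟩ := hnz i j hij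
    ⟨hq', ht', hqt'⟩
  convert sum_map_eq_zero_of_map_eq_neg φ (Equiv.swap_mul_self i₀ i₁)
    (mt Equiv.swap_eq_one_iff.mp hcov.lt.ne)
    (omegaM_mul_prod_pairKernel_antisymm hcov (φ (Equiv.swap i₀ i₁)).toRingHom x
      (hx _) (hq _) (ht _) hf (generic _ _ hcov.lt.ne) (generic _ _ hcov.lt.ne')) using 3
  rw [mul_div_assoc, ← prod_div_distrib]
  simp only [omegaM, pairKernel, inv_div, ltPairs]
end

section
/- With the convention Σ'_{i=a}^{b} f_i := Σ_{i=a}^{b} f_i when a ≤ b+1 and Σ'_{i=a}^{b} f_i := −Σ_{i=b+1}^{a-1} f_i when a ≥ b+1, the following telescoping identity of rational functions holds: for φ(ẑ_i) := z_1^{b_1} ⋯ z_{i-1}^{b_{i-1}} z_{i+1}^{b_i} ⋯ z_{l+1}^{b_l} divided by ∏_{j≠i,i-1, 1≤j≤l}(1 − qt z_j/z_{j+1}) · (1 − qt z_{i-1}/z_{i+1}), one has Σ_{i=1}^{l} (z_i^a φ(ẑ_i) − φ(ẑ_{i+1}) z_{i+1}^a) / ((1 − z_{i+1}/z_i)(1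 − qt z_i/z_{i+1})) = − ( Σ_{i=1}^{l} z_1^{b_1} ⋯ z_{i-1}^{b_{i-1}} ( Σ'_{k=a+1}^{b_i} z_i^k z_{i+1}^{a+b_i−k} ) z_{i+2}^{b_{i+1}} ⋯ z_{l+1}^{b_l} ) / ∏_{j=1}^{l} (1 − qt z_j/z_{j+1}). -/
/-!
Write `f_j = 1 - qt z_j / z_{j+1}`, `D = ∏_{j=1}^l f_j`, `N_i` for the monomial of `φ(ẑ_i)` and
`r_i = qt z_{i-1} / z_{i+1}` (`phiHatCorr`, with `r_1 = r_{l+1} = 0`), so that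
`φ(ẑ_i) = N_i / ((1 - r_i) ∏_{j ≠ i, i-1} f_j)`. Over the common denominator `D` the two missing
factors come back as `f_{i-1} = (1 - r_i) + r_i (1 - z_{i+1}/z_i)` and
`f_{i+1} = (1 - r_{i+1}) + r_{i+1} (1 - z_{i+1}/z_i)`, so the `i`-th summand is
`(z_i^a N_i - N_{i+1} z_{i+1}^a) / ((1 - z_{i+1}/z_i) D) + (T_i - T_{i+1}) / D` with
`T_i = r_i z_i^a N_i / (1 - r_i)` (`telescopeTerm`). The `T_i` telescope to `T_1 - T_{l+1} = 0`.
Since `N_i` and `N_{i+1}` differ only in `z_{i+1}^{b_i}` versus `z_i^{b_i}`, what remains is the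
geometric identity `(u^b w^a - u^a w^b) / (1 - w/u) = Σ'_{k=a+1}^{b} u^k w^{a+b-k}`, valid for all
`a, b` because `Σ'` telescopes whatever the order of its bounds.
-/

/-- The signed sum `Σ'_{k=a}^{b} f k`: equal to `Σ_{k=a}^{b} f k` when `a ≤ b + 1`
and to `−Σ_{k=b+1}^{a−1} f k` when `a ≥ b + 1`. -/
noncomputable def sump {F : Type*} [AddCommGroup F] (a b : ℤ) (f : ℤ → F) : F :=
  if a ≤ b + 1 then ∑ k ∈ Finset.Icc a b, f k else -∑ k ∈ Finset.Icc (b + 1) (a - 1), f k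

/-- The rational function `φ(ẑ_i)` obtained from the Negut kernel by omitting `z_i`,
with the conventions `z_0 = 0`, `z_{l+2} = ∞`. -/
noncomputable def phiHat {F : Type*} [Field F] (q t : F) (z : ℕ → F) (b : ℕ → ℤ)
    (l i : ℕ) : F :=
  ((∏ j ∈ Finset.Icc 1 (i - 1), z j ^ (b j)) * (∏ j ∈ Finset.Icc i l, z (j + 1) ^ (b j))) /
    ((if 2 ≤ i ∧ i ≤ l then 1 - q * t * (z (i - 1) / z (i + 1)) else 1) *
      ∏ j ∈ (Finset.Icc 1 l).filter (fun j => j ≠ i ∧ j ≠ i - 1),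
        (1 - q * t * (z j / z (j + 1))))

open Finset

section SignedSum

variable {G : Type*} [AddCommGroup G]

theorem Int.sum_Icc_sub_pred (h : ℤ → G) {m n : ℤ} (hmn : m - 1 ≤ n) :
    ∑ k ∈ Icc m n, (h k - h (k - 1)) = h n - h (m - 1) := by
  induction n, hmn using Int.leInduction with
  | base => simp
  | succ n hn ih =>
    rw [← insert_Icc_right_eq_Icc_add_one (by omega), sum_insert (by simp), ih]
    simp

theorem sump_sub_pred (h : ℤ → G) (a b : ℤ) :
    sump a b (fun k => h k - h (k - 1)) = h b - h (a - 1) := by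
  unfold sump
  split_ifs with hab
  · exact Int.sum_Icc_sub_pred h (by omega)
  · rw [Int.sum_Icc_sub_pred h (by omega), add_sub_cancel_right, neg_sub]

theorem mul_sump {R : Type*} [Ring R] (c : R) (a b : ℤ) (f : ℤ → R) :
    c * sump a b f = sump a b (fun k => c * f k) := by
  unfold sump
  split_ifs <;> simp only [mul_neg, mul_sum]

theorem mul_sump_zpow_mul_zpow {K : Type*} [Field K] {u w : K} (hu : u ≠ 0) (hw : w ≠ 0)
    (a b : ℤ) :
    (1 - w / u) * sump (a + 1) b (fun k => u ^ k * w ^ (a + b - k)) =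
      u ^ b * w ^ a - u ^ a * w ^ b := by
  have step : ∀ k : ℤ, (1 - w / u) * (u ^ k * w ^ (a + b - k)) =
      u ^ k * w ^ (a + b - k) - u ^ (k - 1) * w ^ (a + b - (k - 1)) := by
    intro k
    rw [zpow_sub_one₀ hu, show a + b - (k - 1) = a + b - k + 1 by ring, zpow_add_one₀ hw]
    field_simp
  rw [mul_sump, funext step, sump_sub_pred (fun k => u ^ k * w ^ (a + b - k)),
    add_sub_cancel_right, add_sub_cancel_right, add_sub_cancel_left]

end SignedSum

theorem prod_Icc_eq_prod_filter_mul {M : Type*} [CommMonoid M] (f : ℕ → M) (l : ℕ) {i : ℕ}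
    (hi : i ≠ 0) :
    ∏ j ∈ Icc 1 l, f j = (∏ j ∈ (Icc 1 l).filter (fun j => j ≠ i ∧ j ≠ i - 1), f j) *
      (if i ∈ Icc 1 l then f i else 1) * (if i - 1 ∈ Icc 1 l then f (i - 1) else 1) := by
  rw [← prod_ite_eq', ← prod_ite_eq', prod_filter, ← prod_mul_distrib, ← prod_mul_distrib]
  refine prod_congr rfl fun j _ => ?_
  split_ifs <;> first | omega | simp

section NegutKernel

variable {F : Type*} [Field F] (q t : F) (z : ℕ → F) (a : ℤ) (b : ℕ → ℤ) (l : ℕ)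

def kerFactor (j : ℕ) : F := 1 - q * t * (z j / z (j + 1))

def phiHatNum (i : ℕ) : F :=
  (∏ j ∈ Icc 1 (i - 1), z j ^ (b j)) * ∏ j ∈ Icc i l, z (j + 1) ^ (b j)

def phiHatCorr (i : ℕ) : F := if 2 ≤ i ∧ i ≤ l then q * t * (z (i - 1) / z (i + 1)) else 0

noncomputable def deltaSummand (i : ℕ) : F :=
  (∏ j ∈ Icc 1 (i - 1), z j ^ (b j)) *
    sump (a + 1) (b i) (fun k => z i ^ k * z (i + 1) ^ (a + b i - k)) *
    ∏ j ∈ Icc (i + 1) l, z (j + 1) ^ (b j)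

def telescopeTerm (i : ℕ) : F :=
  phiHatCorr q t z l i * (z i ^ a * phiHatNum z b l i) / (1 - phiHatCorr q t z l i)

theorem phiHat_eq (i : ℕ) :
    phiHat q t z b l i = phiHatNum z b l i / ((1 - phiHatCorr q t z l i) *
      ∏ j ∈ (Icc 1 l).filter (fun j => j ≠ i ∧ j ≠ i - 1), kerFactor q t z j) := by
  rw [phiHat, phiHatCorr, apply_ite (1 - ·), sub_zero]
  rfl

variable {q t z a b l}

theorem prod_kerFactor_eq_filter_mul {i : ℕ} (hi : 1 ≤ i) (hil : i ≤ l) (hz : z (i + 1) ≠ 0) :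
    ∏ j ∈ Icc 1 l, kerFactor q t z j =
      (∏ j ∈ (Icc 1 l).filter (fun j => j ≠ i ∧ j ≠ i - 1), kerFactor q t z j) *
        kerFactor q t z i * (1 - phiHatCorr q t z l i * (z (i + 1) / z i)) := by
  rw [prod_Icc_eq_prod_filter_mul _ l (show i ≠ 0 by omega), if_pos (mem_Icc.2 ⟨hi, hil⟩),
    phiHatCorr]
  by_cases h : 2 ≤ i
  · rw [if_pos (mem_Icc.2 ⟨by omega, by omega⟩), if_pos ⟨h, hil⟩]
    unfold kerFactor
    rw [Nat.sub_add_cancel hi]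
    field_simp
  · rw [if_neg (show i - 1 ∉ Icc 1 l by simp; omega), if_neg (by omega), zero_mul, sub_zero]

theorem prod_kerFactor_eq_filter_succ_mul {i : ℕ} (hi : 1 ≤ i) (hil : i ≤ l) (hz : z i ≠ 0) :
    ∏ j ∈ Icc 1 l, kerFactor q t z j =
      (∏ j ∈ (Icc 1 l).filter (fun j => j ≠ i + 1 ∧ j ≠ i + 1 - 1), kerFactor q t z j) *
        kerFactor q t z i * (1 - phiHatCorr q t z l (i + 1) * (z (i + 1) / z i)) := by
  rw [prod_Icc_eq_prod_filter_mul _ l (show i + 1 ≠ 0 by omega), Nat.add_sub_cancel,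
    if_pos (mem_Icc.2 ⟨hi, hil⟩), phiHatCorr, mul_right_comm]
  by_cases h : i + 1 ≤ l
  · rw [if_pos (mem_Icc.2 ⟨by omega, h⟩), if_pos ⟨by omega, h⟩, Nat.add_sub_cancel]
    unfold kerFactor
    field_simp
  · rw [if_neg (show i + 1 ∉ Icc 1 l by simp; omega), if_neg (by omega), zero_mul, sub_zero]

theorem phiHatNum_eq {i : ℕ} (hil : i ≤ l) :
    phiHatNum z b l i = (∏ j ∈ Icc 1 (i - 1), z j ^ (b j)) * z (i + 1) ^ (b i) *
      ∏ j ∈ Icc (i + 1) l, z (j + 1) ^ (b j) := by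
  rw [phiHatNum, ← insert_Icc_add_one_left_eq_Icc hil, prod_insert (by simp), mul_assoc]

theorem phiHatNum_succ_eq {i : ℕ} (hi : 1 ≤ i) :
    phiHatNum z b l (i + 1) = (∏ j ∈ Icc 1 (i - 1), z j ^ (b j)) * z i ^ (b i) *
      ∏ j ∈ Icc (i + 1) l, z (j + 1) ^ (b j) := by
  obtain ⟨k, rfl⟩ := Nat.exists_eq_add_of_le' hi
  rw [phiHatNum, Nat.add_sub_cancel, prod_Icc_succ_top (by omega), Nat.add_sub_cancel]

theorem zpow_mul_phiHatNum_sub {i : ℕ} (hi : 1 ≤ i) (hil : i ≤ l) (hz : z i ≠ 0)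
    (hz' : z (i + 1) ≠ 0) :
    z i ^ a * phiHatNum z b l i - phiHatNum z b l (i + 1) * z (i + 1) ^ a =
      -((1 - z (i + 1) / z i) * deltaSummand z a b l i) := by
  rw [phiHatNum_eq hil, phiHatNum_succ_eq hi, deltaSummand]
  linear_combination (∏ j ∈ Icc 1 (i - 1), z j ^ (b j)) *
    (∏ j ∈ Icc (i + 1) l, z (j + 1) ^ (b j)) * mul_sump_zpow_mul_zpow hz hz' a (b i)

theorem telescopeTerm_eq_zero {i : ℕ} (hi : ¬(2 ≤ i ∧ i ≤ l)) :
    telescopeTerm q t z a b l i = 0 := by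
  rw [telescopeTerm, phiHatCorr, if_neg hi, zero_mul, zero_div]

theorem phiHat_summand_eq {i : ℕ} (hi : 1 ≤ i) (hil : i ≤ l) (hz : z i ≠ 0) (hz' : z (i + 1) ≠ 0)
    (hg : 1 - z (i + 1) / z i ≠ 0) (hD : ∏ j ∈ Icc 1 l, kerFactor q t z j ≠ 0)
    (hc : 1 - phiHatCorr q t z l i ≠ 0) (hc' : 1 - phiHatCorr q t z l (i + 1) ≠ 0) :
    (z i ^ a * phiHat q t z b l i - phiHat q t z b l (i + 1) * z (i + 1) ^ a) /
        ((1 - z (i + 1) / z i) * kerFactor q t z i) =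
      (-deltaSummand z a b l i - (telescopeTerm q t z a b l (i + 1) -
        telescopeTerm q t z a b l i)) / ∏ j ∈ Icc 1 l, kerFactor q t z j := by
  have hprod := prod_kerFactor_eq_filter_mul (q := q) (t := t) hi hil hz'
  have hprod' := prod_kerFactor_eq_filter_succ_mul (q := q) (t := t) hi hil hz
  have hN := zpow_mul_phiHatNum_sub (a := a) (b := b) hi hil hz hz'
  rw [phiHat_eq, phiHat_eq, telescopeTerm, telescopeTerm, hprod]
  rw [hprod, mul_ne_zero_iff, mul_ne_zero_iff] at hD
  rw [hprod] at hprod'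
  obtain ⟨⟨hD₁, hf⟩, he₁⟩ := hD
  set D₁ := ∏ j ∈ (Icc 1 l).filter (fun j => j ≠ i ∧ j ≠ i - 1), kerFactor q t z j
  set D₂ := ∏ j ∈ (Icc 1 l).filter (fun j => j ≠ i + 1 ∧ j ≠ i + 1 - 1), kerFactor q t z j
  have he₂ : 1 - phiHatCorr q t z l (i + 1) * (z (i + 1) / z i) ≠ 0 := by
    intro h0
    simp [h0, hD₁, hf, he₁] at hprod'
  have hD₂_eq : D₂ = D₁ * (1 - phiHatCorr q t z l i * (z (i + 1) / z i)) /
      (1 - phiHatCorr q t z l (i + 1) * (z (i + 1) / z i)) := by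
    rw [eq_div_iff he₂]
    apply mul_left_cancel₀ hf
    linear_combination hprod'.symm
  rw [hD₂_eq]
  clear_value D₁ D₂
  generalize z (i + 1) / z i = ρ at *
  generalize phiHatCorr q t z l i = r₁ at *
  generalize phiHatCorr q t z l (i + 1) = r₂ at *
  field_simp
  linear_combination (1 - r₁) * (1 - r₂) * hN

end NegutKernel

/-- The telescoping identity of rational functions used in the proof of the Negut
commutator formula. -/
theorem extended_delta_stmt6 {F : Type*} [Field F] (l : ℕ) (q t : F) (z : ℕ → F)
    (a : ℤ) (b : ℕ → ℤ)
    (hz : ∀ j ∈ Finset.Icc 1 (l + 1), z j ≠ 0)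
    (h1 : ∀ j ∈ Finset.Icc 1 l, 1 - q * t * (z j / z (j + 1)) ≠ 0)
    (h2 : ∀ i ∈ Finset.Icc 1 l, 1 - z (i + 1) / z i ≠ 0)
    (h3 : ∀ i ∈ Finset.Icc 2 l, 1 - q * t * (z (i - 1) / z (i + 1)) ≠ 0) :
    ∑ i ∈ Finset.Icc 1 l,
        (z i ^ a * phiHat q t z b l i - phiHat q t z b l (i + 1) * z (i + 1) ^ a) /
          ((1 - z (i + 1) / z i) * (1 - q * t * (z i / z (i + 1)))) =
    -((∑ i ∈ Finset.Icc 1 l,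
          (∏ j ∈ Finset.Icc 1 (i - 1), z j ^ (b j)) *
            sump (a + 1) (b i) (fun k => z i ^ k * z (i + 1) ^ (a + b i - k)) *
            ∏ j ∈ Finset.Icc (i + 1) l, z (j + 1) ^ (b j)) /
        ∏ j ∈ Finset.Icc 1 l, (1 - q * t * (z j / z (j + 1)))) := by
  have hD : ∏ j ∈ Icc 1 l, kerFactor q t z j ≠ 0 := prod_ne_zero_iff.2 h1
  have hc (i : ℕ) : 1 - phiHatCorr q t z l i ≠ 0 := by
    unfold phiHatCorr
    split_ifs with h
    · exact h3 i (mem_Icc.2 h)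
    · simp
  have hsummand (i : ℕ) (hi : i ∈ Icc 1 l) :=
    have ⟨hi₁, hil⟩ := mem_Icc.1 hi
    phiHat_summand_eq (a := a) (b := b) hi₁ hil (hz i (mem_Icc.2 ⟨hi₁, by omega⟩))
      (hz (i + 1) (mem_Icc.2 ⟨by omega, by omega⟩)) (h2 i hi) hD (hc i) (hc (i + 1))
  have htelescope : ∑ i ∈ Icc 1 l, (telescopeTerm q t z a b l (i + 1) -
      telescopeTerm q t z a b l i) = 0 := by
    rw [← Ico_add_one_right_eq_Icc, sum_Ico_sub _ (by omega),
      telescopeTerm_eq_zero (by omega), telescopeTerm_eq_zero (by omega), sub_zero]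
  calc _ = ∑ i ∈ Icc 1 l, (-deltaSummand z a b l i - (telescopeTerm q t z a b l (i + 1) -
          telescopeTerm q t z a b l i)) / ∏ j ∈ Icc 1 l, kerFactor q t z j :=
        sum_congr rfl hsummand
    _ = -((∑ i ∈ Icc 1 l, deltaSummand z a b l i) / ∏ j ∈ Icc 1 l, kerFactor q t z j) := by
      rw [← sum_div, sum_sub_distrib, htelescope, sub_zero, sum_neg_distrib, neg_div]
end

section
/- Let β, α ∈ N^N with α_i ≤ β_i for all i, and let S be a row-strict tableau of the tuple of single-row skew shapes β/α with entries in N = {0,1,2,…}. Let I ⊆ [N] be the set of rows of S containing a 0 (necessarily as the leftmost entry), and let T be the tableau of shape β/(α+ε_I) obtained by deleting all zeros from S, where ε_I is the 0-1 indicator vector of I. Then h_{w_0}(T) = h_{w_0}(S) − h_I(α), where h_{w_0} counts increasing w_0-triples and h_I(α) = |{(r,s) : r < s, r ∈ I, s ∉ I, α_s = α_r + 1}|. -/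
/-- `S` is a row-strict filling of the tuple of single-row skew shapes `β/α` with
rows `1,…,n`, row `j` having boxes with x-coordinates `α j + 1, …, β j`. -/
def RowStrict (n : ℕ) (α β : ℕ → ℕ) (S : ℕ → ℕ → ℕ) : Prop :=
  ∀ j ∈ Finset.Icc 1 n, ∀ x, α j + 1 ≤ x → x + 1 ≤ β j → S j x < S j (x + 1)

/-- The w₀-triples of `β/α`: triples `(r, j, x)` with `r < j`, a box `v` of row `r`
at x-coordinate `x`, and boxes `u, w` in or adjacent to row `j` at x-coordinates
`x, x+1` (equivalently `α j ≤ x ≤ β j`). -/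
def triplesF (n : ℕ) (α β : ℕ → ℕ) : Finset (ℕ × ℕ × ℕ) :=
  ((Finset.Icc 1 n) ×ˢ (Finset.Icc 1 n) ×ˢ
      (Finset.range ((Finset.Icc 1 n).sup β + 1))).filter
    (fun p => p.1 < p.2.1 ∧ α p.1 + 1 ≤ p.2.2 ∧ p.2.2 ≤ β p.1 ∧
      α p.2.1 ≤ p.2.2 ∧ p.2.2 ≤ β p.2.1)

/-- The w₀-triples of `β/α` that are increasing in `S`, with the conventions
`S(u) = −∞` when `u` is adjacent to the left end of its row and `S(w) = +∞`
when `w` is adjacent to the right end. -/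
def incTriples (n : ℕ) (α β : ℕ → ℕ) (S : ℕ → ℕ → ℕ) : Finset (ℕ × ℕ × ℕ) :=
  (triplesF n α β).filter (fun p =>
    (p.2.2 = α p.2.1 ∨ S p.2.1 p.2.2 < S p.1 p.2.2) ∧
    (p.2.2 = β p.2.1 ∨ S p.1 p.2.2 < S p.2.1 (p.2.2 + 1)))

private lemma mem_inc {n : ℕ} {α β : ℕ → ℕ} {S : ℕ → ℕ → ℕ} {r j x : ℕ} :
    (r, j, x) ∈ incTriples n α β S ↔
      (r ∈ Finset.Icc 1 n ∧ j ∈ Finset.Icc 1 n ∧ x < (Finset.Icc 1 n).sup β + 1 ∧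
       r < j ∧ α r + 1 ≤ x ∧ x ≤ β r ∧ α j ≤ x ∧ x ≤ β j) ∧
      ((x = α j ∨ S j x < S r x) ∧ (x = β j ∨ S r x < S j (x + 1))) := by
  simp only [incTriples, triplesF, Finset.mem_filter, Finset.mem_product, Finset.mem_range]
  tauto

private lemma zero_unique {n : ℕ} {α β : ℕ → ℕ} {S : ℕ → ℕ → ℕ}
    (hS : RowStrict n α β S) {j x : ℕ} (hj : j ∈ Finset.Icc 1 n)
    (hx1 : α j + 1 ≤ x) (hx2 : x ≤ β j) (h0 : S j x = 0) : x = α j + 1 := by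
  by_contra hne
  have hx : α j + 1 ≤ x - 1 := by omega
  have h := hS j hj (x - 1) hx (by omega)
  have hx' : x - 1 + 1 = x := by omega
  rw [hx', h0] at h
  exact Nat.not_lt_zero _ h

private lemma zero_iff {n : ℕ} {α β : ℕ → ℕ} {S : ℕ → ℕ → ℕ}
    (hS : RowStrict n α β S) {j : ℕ} (hj : j ∈ Finset.Icc 1 n) :
    (0 ∈ (Finset.Icc (α j + 1) (β j)).image (S j)) ↔
      (α j + 1 ≤ β j ∧ S j (α j + 1) = 0) := by
  constructor
  · intro h
    rw [Finset.mem_image] at h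
    obtain ⟨x, hx, h0⟩ := h
    rw [Finset.mem_Icc] at hx
    have hx1 := zero_unique hS hj hx.1 hx.2 h0
    subst hx1
    exact ⟨hx.2, h0⟩
  · rintro ⟨h1, h2⟩
    exact Finset.mem_image.2 ⟨α j + 1, Finset.mem_Icc.2 ⟨le_refl _, h1⟩, h2⟩

/-- Deleting the zeros of a row-strict tableau `S` of `β/α` over `ℕ` (so the zeros,
necessarily leftmost in their rows `I`, are removed, giving a tableau of
`β/(α+ε_I)` with the same entries on the remaining boxes) drops the number of
increasing w₀-triples by exactly `h_I(α)`. -/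
theorem extended_delta_stmt8 (n : ℕ) (α β : ℕ → ℕ)
    (hαβ : ∀ j ∈ Finset.Icc 1 n, α j ≤ β j)
    (S : ℕ → ℕ → ℕ) (hS : RowStrict n α β S) :
    (incTriples n
        (fun j => α j +
          (if 0 ∈ (Finset.Icc (α j + 1) (β j)).image (S j) then 1 else 0)) β S).card +
      (((Finset.Icc 1 n) ×ˢ (Finset.Icc 1 n)).filter (fun p =>
          p.1 < p.2 ∧ 0 ∈ (Finset.Icc (α p.1 + 1) (β p.1)).image (S p.1) ∧
          0 ∉ (Finset.Icc (α p.2 + 1) (β p.2)).image (S p.2) ∧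
          α p.2 = α p.1 + 1)).card =
    (incTriples n α β S).card := by
  classical
  set α' : ℕ → ℕ := fun j => α j +
      (if 0 ∈ (Finset.Icc (α j + 1) (β j)).image (S j) then 1 else 0) with hα'
  set A := incTriples n α' β S with hA
  set B := incTriples n α β S with hB
  set P := ((Finset.Icc 1 n) ×ˢ (Finset.Icc 1 n)).filter (fun p =>
      p.1 < p.2 ∧ 0 ∈ (Finset.Icc (α p.1 + 1) (β p.1)).image (S p.1) ∧
      0 ∉ (Finset.Icc (α p.2 + 1) (β p.2)).image (S p.2) ∧
      α p.2 = α p.1 + 1) with hP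
  have hεb : ∀ t, α t ≤ α' t ∧ α' t ≤ α t + 1 := by
    intro t
    simp only [hα']
    split_ifs <;> omega
  have hεI : ∀ t, (0 ∈ (Finset.Icc (α t + 1) (β t)).image (S t)) → α' t = α t + 1 := by
    intro t ht
    simp only [hα', if_pos ht]
  have hεnI : ∀ t, (0 ∉ (Finset.Icc (α t + 1) (β t)).image (S t)) → α' t = α t := by
    intro t ht
    simp only [hα', if_neg ht]
    omega
  -- A ⊆ B
  have hsub : A ⊆ B := by
    rintro ⟨r, j, x⟩ hp
    rw [hA, mem_inc] at hp
    rw [hB, mem_inc]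
    obtain ⟨⟨hr, hj, hxs, hrj, hxr, hxr2, hxj, hxj2⟩, hL, hR⟩ := hp
    have h1 := hεb r
    have h2 := hεb j
    refine ⟨⟨hr, hj, hxs, hrj, by omega, hxr2, by omega, hxj2⟩, ?_, hR⟩
    rcases hL with hL | hL
    · -- x = α' j
      by_cases hIj : 0 ∈ (Finset.Icc (α j + 1) (β j)).image (S j)
      · -- α' j = α j + 1, so x = α j + 1 and S j x = 0
        have hj1 := (zero_iff hS hj).1 hIj
        have hx : x = α j + 1 := by have := hεI j hIj; omega
        right
        rw [hx, hj1.2]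
        by_contra h0
        have h0' : S r (α j + 1) = 0 := by omega
        have hxu : α j + 1 = α r + 1 := zero_unique hS hr (by omega) (by omega) h0'
        have hIr : 0 ∈ (Finset.Icc (α r + 1) (β r)).image (S r) := by
          rw [zero_iff hS hr]
          exact ⟨by omega, by rw [← hxu]; exact h0'⟩
        have := hεI r hIr
        omega
      · left
        have := hεnI j hIj
        omega
    · right; exact hL
  -- B \ A is the image of P
  have key : B \ A = P.image (fun q : ℕ × ℕ => (q.1, q.2, α q.1 + 1)) := by
    ext ⟨r, j, x⟩
    rw [Finset.mem_sdiff]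
    constructor
    · rintro ⟨hBm, hAm⟩
      rw [hB, mem_inc] at hBm
      rw [hA, mem_inc] at hAm
      obtain ⟨⟨hr, hj, hxs, hrj, hxr, hxr2, hxj, hxj2⟩, hL, hR⟩ := hBm
      have h1 := hεb r
      have h2 := hεb j
      have hcases : x < α' r + 1 ∨ x < α' j := by
        by_contra hc
        push_neg at hc
        apply hAm
        refine ⟨⟨hr, hj, hxs, hrj, by omega, hxr2, by omega, hxj2⟩, ?_, hR⟩
        rcases hL with hL | hL
        · by_cases hIj : 0 ∈ (Finset.Icc (α j + 1) (β j)).image (S j)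
          · have := hεI j hIj; omega
          · left; have := hεnI j hIj; omega
        · right; exact hL
      by_cases hIj : 0 ∈ (Finset.Icc (α j + 1) (β j)).image (S j)
      · exfalso
        have hj1 := (zero_iff hS hj).1 hIj
        rcases hcases with hc | hc
        · have hIr : 0 ∈ (Finset.Icc (α r + 1) (β r)).image (S r) := by
            by_contra hIr; have := hεnI r hIr; omega
          have hr1 := (zero_iff hS hr).1 hIr
          have hxv : x = α r + 1 := by have := hεI r hIr; omega
          have hSr0 : S r x = 0 := by rw [hxv]; exact hr1.2
          have hxαj : x = α j := by
            rcases hL with hL | hL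
            · exact hL
            · rw [hSr0] at hL; omega
          rcases hR with hR | hR
          · omega
          · rw [hSr0, hxαj, hj1.2] at hR; exact Nat.not_lt_zero _ hR
        · have hxαj : x = α j := by have := hεI j hIj; omega
          rcases hR with hR | hR
          · omega
          · have hSj0 : S j (x + 1) = 0 := by rw [hxαj]; exact hj1.2
            rw [hSj0] at hR; exact Nat.not_lt_zero _ hR
      · have hαj' := hεnI j hIj
        have hc : x < α' r + 1 := by rcases hcases with hc | hc <;> omega
        have hIr : 0 ∈ (Finset.Icc (α r + 1) (β r)).image (S r) := by
          by_contra hIr; have := hεnI r hIr; omega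
        have hr1 := (zero_iff hS hr).1 hIr
        have hxv : x = α r + 1 := by have := hεI r hIr; omega
        have hSr0 : S r x = 0 := by rw [hxv]; exact hr1.2
        have hxαj : x = α j := by
          rcases hL with hL | hL
          · exact hL
          · rw [hSr0] at hL; omega
        refine Finset.mem_image.2 ⟨(r, j), ?_, ?_⟩
        · rw [hP, Finset.mem_filter, Finset.mem_product]
          exact ⟨⟨hr, hj⟩, hrj, hIr, hIj, show α j = α r + 1 by omega⟩
        · exact Prod.ext rfl (Prod.ext rfl hxv.symm)
    · intro hm
      obtain ⟨q, hq, heq⟩ := Finset.mem_image.1 hm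
      obtain ⟨a, b⟩ := q
      rw [hP, Finset.mem_filter, Finset.mem_product] at hq
      obtain ⟨⟨ha, hb⟩, hab, hIa, hIb, hαab⟩ := hq
      dsimp only at ha hb hab hIa hIb hαab heq
      obtain ⟨rfl, rfl, rfl⟩ : a = r ∧ b = j ∧ α a + 1 = x := by
        simpa [Prod.ext_iff] using heq
      have ha1 := (zero_iff hS ha).1 hIa
      have hbβ := hαβ b hb
      constructor
      · rw [hB, mem_inc]
        refine ⟨⟨ha, hb, ?_, hab, le_refl _, ha1.1, by omega, by omega⟩,
          Or.inl (by omega), ?_⟩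
        · have hsupa : β a ≤ (Finset.Icc 1 n).sup β := Finset.le_sup ha
          omega
        · by_cases hxb : α a + 1 = β b
          · exact Or.inl hxb
          · refine Or.inr ?_
            rw [ha1.2]
            have hb1 : α b + 1 ≤ β b := by omega
            have hxx : α a + 1 + 1 = α b + 1 := by omega
            rw [hxx]
            rcases Nat.eq_zero_or_pos (S b (α b + 1)) with h0 | h0
            · exact absurd ((zero_iff hS hb).2 ⟨hb1, h0⟩) hIb
            · exact h0
      · rw [hA, mem_inc]
        rintro ⟨⟨_, _, _, _, hcon, _⟩, _⟩
        have := hεI a hIa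
        omega
  -- conclude
  have hcard : (B \ A).card = P.card := by
    rw [key]
    refine Finset.card_image_of_injective P (fun p q h => ?_)
    simp only [Prod.ext_iff] at h ⊢
    exact ⟨h.1, h.2.1⟩
  have := Finset.card_sdiff_add_card_eq_card hsub
  omega
end

section
/- For a tuple of single-row skew shapes β/α with α, β ∈ Z^l and α_j ≤ β_j for all j, the number of w_0-triples equals h_{w_0}(β/α) = Σ_{r < j} | [α_r+1, β_r] ∩ [α_j, β_j] |, where [a,b] = {a, a+1, …, b}. -/
/-- For a tuple of single-row skew shapes `β/α` (rows `1,…,l`, row `j` having boxes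
with x-coordinates `α j + 1, …, β j`, and adjacent boxes at `α j`, `β j + 1`), the
number of w₀-triples — triples `(r, j, x)` with `r < j`, a box of row `r` at
x-coordinate `x`, and boxes in or adjacent to row `j` at x-coordinates `x, x+1` —
equals `Σ_{r<j} |[α_r+1, β_r] ∩ [α_j, β_j]|`. -/
theorem extended_delta_stmt9 (l : ℕ) (α β : ℕ → ℤ)
    (h : ∀ j ∈ Finset.Icc 1 l, α j ≤ β j) :
    Set.ncard {p : ℕ × ℕ × ℤ |
        1 ≤ p.1 ∧ p.1 < p.2.1 ∧ p.2.1 ≤ l ∧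
        α p.1 + 1 ≤ p.2.2 ∧ p.2.2 ≤ β p.1 ∧
        α p.2.1 ≤ p.2.2 ∧ p.2.2 + 1 ≤ β p.2.1 + 1} =
      ∑ p ∈ ((Finset.Icc 1 l) ×ˢ (Finset.Icc 1 l)).filter (fun p => p.1 < p.2),
        ((Finset.Icc (α p.1 + 1) (β p.1)) ∩ (Finset.Icc (α p.2) (β p.2))).card := by
  classical
  set F := ((Finset.Icc 1 l) ×ˢ (Finset.Icc 1 l)).filter (fun p => p.1 < p.2) with hF
  set T : Finset (ℕ × ℕ × ℤ) := F.biUnion (fun p =>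
      ((Finset.Icc (α p.1 + 1) (β p.1)) ∩ (Finset.Icc (α p.2) (β p.2))).image
        (fun x => (p.1, p.2, x))) with hT
  have hset : {p : ℕ × ℕ × ℤ |
        1 ≤ p.1 ∧ p.1 < p.2.1 ∧ p.2.1 ≤ l ∧
        α p.1 + 1 ≤ p.2.2 ∧ p.2.2 ≤ β p.1 ∧
        α p.2.1 ≤ p.2.2 ∧ p.2.2 + 1 ≤ β p.2.1 + 1} = ↑T := by
    ext ⟨r, j, x⟩
    simp only [hT, hF, Set.mem_setOf_eq, Finset.coe_biUnion, Set.mem_iUnion,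
      Finset.mem_coe, Finset.mem_image, Finset.mem_inter, Finset.mem_Icc,
      Finset.mem_filter, Finset.mem_product, Prod.exists]
    constructor
    · rintro ⟨h1, h2, h3, h4, h5, h6, h7⟩
      exact ⟨r, j, ⟨⟨⟨h1, le_of_lt (lt_of_lt_of_le h2 h3)⟩,
        ⟨le_trans h1 (le_of_lt h2), h3⟩⟩, h2⟩, x, ⟨⟨h4, h5⟩, ⟨h6, by omega⟩⟩, rfl⟩
    · rintro ⟨a, b, ⟨⟨⟨ha1, _⟩, ⟨_, hb2⟩⟩, hab⟩, y, ⟨⟨hy1, hy2⟩, ⟨hy3, hy4⟩⟩, heq⟩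
      obtain ⟨rfl, rfl, rfl⟩ := Prod.mk.injEq .. ▸ (by
        have := heq; exact ⟨congrArg Prod.fst heq,
          congrArg (Prod.fst ∘ Prod.snd) heq, congrArg (Prod.snd ∘ Prod.snd) heq⟩ :
          a = r ∧ b = j ∧ y = x)
      exact ⟨ha1, hab, hb2, hy1, hy2, hy3, by omega⟩
  rw [hset, Set.ncard_coe_finset, hT]
  rw [Finset.card_biUnion]
  · refine Finset.sum_congr rfl fun p _ => ?_
    rw [Finset.card_image_of_injective _ (fun a b hab => by
      simpa using congrArg (Prod.snd ∘ Prod.snd) hab)]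
  · intro p hp q hq hpq
    simp only [Finset.disjoint_left, Finset.mem_image]
    rintro z ⟨x, _, rfl⟩ ⟨y, _, hzy⟩
    apply hpq
    have h1 := congrArg Prod.fst hzy
    have h2 := congrArg (Prod.fst ∘ Prod.snd) hzy
    exact Prod.ext h1.symm h2.symm
end

section
/- Let a_0 = 0, a = (a_1,…,a_{m-1}) ∈ N^{m-1}, τ = (τ_1,…,τ_m) ∈ N^m, and assume a_j ≤ a_{j-1} + τ_j + 1 for all j ∈ [m]. Then Σ_{1 ≤ j < r ≤ m} | [a_j, a_{j-1}+τ_j] ∩ [a_{r-1}, a_{r-1}+τ_r−1] | = Σ_{1 ≤ j < r ≤ m} | [a_{j-1}, a_{j-1}+τ_j] ∩ [a_{r-1}, a_{r-1}+τ_r−1] |, i.e., this double sum is unchanged upon replacing the lower endpoint a_j by a_{j-1}. -/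
lemma split_card_aux (a b c d : ℤ) (hab : a ≤ b + 1) :
    ((Finset.Icc a b ∩ Finset.Icc c d).card : ℤ)
      = ((Finset.Icc (max a c) d).card : ℤ) - ((Finset.Icc (max (b+1) c) d).card : ℤ) := by
  have : Finset.Icc a b ∩ Finset.Icc c d = Finset.Icc (max a c) (min b d) := by
    ext x; simp only [Finset.mem_inter, Finset.mem_Icc]; omega
  rw [this]
  simp only [Int.card_Icc]
  omega

/-- With `a_0 = 0` and `a_j ≤ a_{j-1} + τ_j + 1` for all `j ∈ [m]`, the double sum
`Σ_{1≤j<r≤m} |[a_j, a_{j-1}+τ_j] ∩ [a_{r-1}, a_{r-1}+τ_r−1]|` is unchanged upon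
replacing the lower endpoint `a_j` by `a_{j-1}`. -/
theorem extended_delta_stmt10 (m : ℕ) (a τ : ℕ → ℕ) (ha0 : a 0 = 0)
    (h : ∀ j ∈ Finset.Icc 1 m, a j ≤ a (j - 1) + τ j + 1) :
    ∑ p ∈ ((Finset.Icc 1 m) ×ˢ (Finset.Icc 1 m)).filter (fun p => p.1 < p.2),
        ((Finset.Icc ((a p.1 : ℤ)) ((a (p.1 - 1) : ℤ) + (τ p.1 : ℤ))) ∩
          (Finset.Icc ((a (p.2 - 1) : ℤ)) ((a (p.2 - 1) : ℤ) + (τ p.2 : ℤ) - 1))).card =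
      ∑ p ∈ ((Finset.Icc 1 m) ×ˢ (Finset.Icc 1 m)).filter (fun p => p.1 < p.2),
        ((Finset.Icc ((a (p.1 - 1) : ℤ)) ((a (p.1 - 1) : ℤ) + (τ p.1 : ℤ))) ∩
          (Finset.Icc ((a (p.2 - 1) : ℤ)) ((a (p.2 - 1) : ℤ) + (τ p.2 : ℤ) - 1))).card := by
  classical
  conv_lhs => rw [Finset.sum_filter, Finset.sum_product, Finset.sum_comm]
  conv_rhs => rw [Finset.sum_filter, Finset.sum_product, Finset.sum_comm]
  refine Finset.sum_congr rfl fun r hr => ?_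
  rw [Finset.mem_Icc] at hr
  dsimp only
  have hgen : ∀ f : ℕ → ℕ, (∑ j ∈ Finset.Icc 1 m, if j < r then f j else 0)
      = ∑ j ∈ Finset.Icc 1 (r - 1), f j := by
    intro f
    rw [← Finset.sum_filter]
    refine Finset.sum_congr ?_ fun _ _ => rfl
    ext x; simp only [Finset.mem_filter, Finset.mem_Icc]; omega
  rw [hgen, hgen]
  set c : ℤ := (a (r - 1) : ℤ) with hc
  set d : ℤ := c + (τ r : ℤ) - 1 with hd
  have key : ∀ j ∈ Finset.Icc 1 (r - 1),
      (((Finset.Icc ((a j : ℤ)) ((a (j - 1) : ℤ) + (τ j : ℤ))) ∩ Finset.Icc c d).card : ℤ)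
        = ((Finset.Icc (max (a j : ℤ) c) d).card : ℤ)
          - ((Finset.Icc (max ((a (j-1) : ℤ) + (τ j : ℤ) + 1) c) d).card : ℤ) := by
    intro j hj
    rw [Finset.mem_Icc] at hj
    have hj' := h j (Finset.mem_Icc.mpr ⟨hj.1, by omega⟩)
    have : (a j : ℤ) ≤ (a (j-1) : ℤ) + (τ j : ℤ) + 1 := by exact_mod_cast hj'
    exact split_card_aux _ _ _ _ this
  have key2 : ∀ j ∈ Finset.Icc 1 (r - 1),
      (((Finset.Icc ((a (j-1) : ℤ)) ((a (j - 1) : ℤ) + (τ j : ℤ))) ∩ Finset.Icc c d).card : ℤ)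
        = ((Finset.Icc (max (a (j-1) : ℤ) c) d).card : ℤ)
          - ((Finset.Icc (max ((a (j-1) : ℤ) + (τ j : ℤ) + 1) c) d).card : ℤ) := by
    intro j hj
    exact split_card_aux _ _ _ _ (by omega)
  have main : (∑ j ∈ Finset.Icc 1 (r-1),
      (((Finset.Icc ((a j : ℤ)) ((a (j - 1) : ℤ) + (τ j : ℤ))) ∩ Finset.Icc c d).card : ℤ))
      = ∑ j ∈ Finset.Icc 1 (r-1),
      (((Finset.Icc ((a (j-1) : ℤ)) ((a (j - 1) : ℤ) + (τ j : ℤ))) ∩ Finset.Icc c d).card : ℤ) := by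
    rw [Finset.sum_congr rfl key, Finset.sum_congr rfl key2, ← sub_eq_zero,
      ← Finset.sum_sub_distrib]
    set F : ℕ → ℤ := fun i => ((Finset.Icc (max (a i : ℤ) c) d).card : ℤ) with hF
    have hsimp : ∀ j ∈ Finset.Icc 1 (r-1),
        (((Finset.Icc (max (a j : ℤ) c) d).card : ℤ)
          - ((Finset.Icc (max ((a (j-1) : ℤ) + (τ j : ℤ) + 1) c) d).card : ℤ))
        - (((Finset.Icc (max (a (j-1) : ℤ) c) d).card : ℤ)
          - ((Finset.Icc (max ((a (j-1) : ℤ) + (τ j : ℤ) + 1) c) d).card : ℤ))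
        = F j - F (j - 1) := by
      intro j hj; simp only [hF]; ring
    rw [Finset.sum_congr rfl hsimp]
    have hico : Finset.Icc 1 (r-1) = Finset.Ico 1 r := by
      ext x; simp only [Finset.mem_Icc, Finset.mem_Ico]; omega
    have htel : ∑ j ∈ Finset.Icc 1 (r-1), (F j - F (j-1))
        = ∑ i ∈ Finset.range (r-1), (F (i+1) - F i) := by
      rw [hico, Finset.sum_Ico_eq_sum_range]
      refine Finset.sum_congr rfl fun i _ => ?_
      congr 2 <;> omega
    rw [htel, Finset.sum_range_sub]
    have hc0 : (0:ℤ) ≤ c := Int.natCast_nonneg _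
    have h0 : F 0 = ((Finset.Icc c d).card : ℤ) := by
      show ((Finset.Icc ((a 0 : ℤ) ⊔ c) d).card : ℤ) = _
      rw [ha0]
      norm_num [max_eq_right hc0]
    have hr1 : F (r-1) = ((Finset.Icc c d).card : ℤ) := by
      show ((Finset.Icc ((a (r-1) : ℤ) ⊔ c) d).card : ℤ) = _
      rw [← hc, max_self]
    rw [h0, hr1, sub_self]
  exact_mod_cast main
end

section
/- Let m ≥ 1, n = N − l ≥ 1, and k = m − l. The set of pairs consisting of a path ν ∈ P_{k,n} (an admissible path from (0,n) to (k,0) whose east steps occur one each on lines y = j for j in a chosen (k−1)-subset of [n−1], plus a final east step at y = 0) together with a vector r ∈ N^n with |r| = l, is in bijection with the set of pairs (s, I) with s ∈ N^m, |s| = n−k, and I ⊆ {2,…,m}, |I| = l: both sets index admissible paths γ from (0,n) to (m,0) together with a choice of k−1 east-south corners, recorded either by their y-coordinates (a (k−1)-subset of [n−1] of lines containing an east step) or by their x-coordinates (a set of k−1 values i ∈ [m−1] at which γ has a south step on the line x = i). Moreover Σ_{s ∈ N^m, |s|=n−k} Σ_{I ⊆ [2,m], |I|=l} x^{s + (1^m)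 − ε_I} = x_1 x_2 ⋯ x_m · h_{n−k}(x_1,…,x_m) · e_l(x_2^{−1},…,x_m^{−1}). -/
/-- The paths `ν ∈ P_{k,n}` together with a vector `r ∈ ℕⁿ`, `|r| = l`.  A path in
`P_{k,n}` is encoded by its horizontal-run vector: run `1` at height `0` (final east
step), runs in `{0,1}` at the heights `1,…,n−1` with exactly `k−1` ones. -/
def pathVecPairs (n k l : ℕ) : Set ((Fin n → ℕ) × (Fin n → ℕ)) :=
  {p | (∀ y : Fin n, (y : ℕ) = 0 → p.1 y = 1) ∧ (∀ y : Fin n, (y : ℕ) ≠ 0 → p.1 y ≤ 1) ∧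
    (∑ y ∈ Finset.univ.filter (fun y : Fin n => (y : ℕ) ≠ 0), p.1 y) = k - 1 ∧
    (∑ y, p.2 y) = l}

/-- Pairs `(s, I)` with `s ∈ ℕ^m`, `|s| = n−k`, and `I ⊆ [2,m]`, `|I| = l`
(coordinates indexed by `Fin m`, with `i = 0` corresponding to `1 ∈ [m]`). -/
def vecSubsetPairs (m n k l : ℕ) : Set ((Fin m → ℕ) × Finset (Fin m)) :=
  {p | (∑ i, p.1 i) = n - k ∧ (∀ i ∈ p.2, (i : ℕ) ≠ 0) ∧ p.2.card = l}

/-!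
Both index sets encode an admissible path `γ` from `(0,n)` to `(m,0)` with `k - 1` marked
east-south corners. A pair `(ν, r)` gives `γ` by its horizontal runs `a(ν) + r` and marks the
corners at the heights of the east steps of `ν` above the bottom line; a pair `(s, I)` gives `γ`
by its vertical runs `s + 1 - ε_I` and marks the corners on the lines `x = i`, `i ∈ [2,m] \ I`.
Passing from horizontal to vertical runs is transposition of the path, an involution, and it
moves the corner at height `y` to the line `x = tailSum c y`; this is a bijection between the
corners of a path and those of its transpose, so the two markings correspond. The monomial
identity is `x^(s + 1 - ε_I) = x₁⋯x_m · x^s · x^(-ε_I)`, summed over `s` and `I`.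
-/

open Finset

section Runs

variable {n m : ℕ}

/-- `c y` is the number of east steps on the line `y` of a south-east path from `(0, n)` to
`(m, 0)`; the path is admissible (starts south, ends east) iff `c 0 ≠ 0`.  Its south step from
height `y + 1` to `y` lies on the line `x = tailSum c ((y : ℕ) + 1)`. -/
def IsAdmissible (m : ℕ) (c : Fin n → ℕ) : Prop :=
  ∑ y, c y = m ∧ ∀ y : Fin n, (y : ℕ) = 0 → 0 < c y

def tailSum (c : Fin n → ℕ) (j : ℕ) : ℕ := ∑ t : Fin n with j ≤ t.val, c t

lemma tailSum_zero (c : Fin n → ℕ) : tailSum c 0 = ∑ t, c t := by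
  simp [tailSum]

lemma tailSum_of_le (c : Fin n → ℕ) {j : ℕ} (h : n ≤ j) : tailSum c j = 0 :=
  sum_eq_zero fun t ht => by have := (mem_filter.1 ht).2; omega

lemma tailSum_antitone (c : Fin n → ℕ) : Antitone (tailSum c) := fun _ _ hij =>
  sum_le_sum_of_subset fun t ht => mem_filter.2 ⟨mem_univ t, hij.trans (mem_filter.1 ht).2⟩

lemma tailSum_eq_add (c : Fin n → ℕ) (y : Fin n) :
    tailSum c y = c y + tailSum c ((y : ℕ) + 1) := by
  have : univ.filter (fun t : Fin n => (y : ℕ) ≤ t) =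
      insert y (univ.filter fun t : Fin n => (y : ℕ) + 1 ≤ t) := by
    ext t; simp [Nat.le_iff_lt_or_eq, Fin.ext_iff, eq_comm, or_comm]
  rw [tailSum, this, sum_insert (by simp)]
  rfl

lemma tailSum_le_tailSum_iff {c : Fin n → ℕ} {y : Fin n} (hy : 0 < c y) (j : ℕ) :
    tailSum c y ≤ tailSum c j ↔ j ≤ y := by
  refine ⟨fun h => ?_, fun h => tailSum_antitone c h⟩
  by_contra! hj
  have := tailSum_antitone c (show (y : ℕ) + 1 ≤ j from hj)
  have := tailSum_eq_add c y
  omega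

lemma IsAdmissible.tailSum_succ_lt {c : Fin n → ℕ} (hc : IsAdmissible m c) (y : Fin n) :
    tailSum c ((y : ℕ) + 1) < m := by
  have h0 := tailSum_eq_add c ⟨0, y.pos⟩
  have := tailSum_antitone c (show 0 + 1 ≤ (y : ℕ) + 1 by omega)
  have := hc.2 ⟨0, y.pos⟩ rfl
  rw [tailSum_zero, hc.1] at h0
  simp only at h0 this
  omega

lemma IsAdmissible.tailSum_lt {c : Fin n → ℕ} (hc : IsAdmissible m c) {y : Fin n}
    (hy : (y : ℕ) ≠ 0) : tailSum c y < m := by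
  simpa [Nat.sub_add_cancel (Nat.one_le_iff_ne_zero.2 hy)] using
    hc.tailSum_succ_lt ⟨y - 1, by omega⟩

/-- The vertical runs of the path with horizontal runs `c`: `transposeRuns m c i` is the number of
south steps on the line `x = i`. -/
def transposeRuns (m : ℕ) (c : Fin n → ℕ) : Fin m → ℕ :=
  fun i => #{y : Fin n | tailSum c ((y : ℕ) + 1) = i}

lemma tailSum_transposeRuns {c : Fin n → ℕ} (hc : IsAdmissible m c) (j : ℕ) :
    tailSum (transposeRuns m c) j = #{y : Fin n | j ≤ tailSum c ((y : ℕ) + 1)} := by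
  rw [card_eq_sum_card_fiberwise (t := {i : Fin m | j ≤ (i : ℕ)})
    (f := fun y : Fin n => (⟨tailSum c ((y : ℕ) + 1), hc.tailSum_succ_lt y⟩ : Fin m))
    (fun y hy => by simpa using hy)]
  refine sum_congr rfl fun i hi => congrArg card ?_
  ext y
  simp only [mem_filter, mem_univ, true_and] at hi ⊢
  rw [Fin.ext_iff]
  exact ⟨fun h => ⟨h ▸ hi, h⟩, And.right⟩

lemma Fin.lt_card_filter_iff_of_antitone {P : Fin n → Prop} [DecidablePred P]
    (hP : Antitone P) (y : Fin n) : (y : ℕ) < #{x | P x} ↔ P y := by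
  constructor
  · intro hy
    by_contra hPy
    have : ({x | P x} : Finset (Fin n)) ⊆ Iio y := fun x hx => by
      by_contra hxy
      exact hPy (hP (not_lt.1 (by simpa using hxy)) (by simpa using hx))
    have := card_le_card this
    rw [Fin.card_Iio] at this
    omega
  · intro hPy
    have : Iic y ⊆ ({x | P x} : Finset (Fin n)) := fun x hx => by
      simpa using hP (by simpa using hx : x ≤ y) hPy
    have := card_le_card this
    rw [Fin.card_Iic] at this
    omega

/-- The Galois connection behind the transposition of paths. -/
lemma lt_tailSum_transposeRuns_iff {c : Fin n → ℕ} (hc : IsAdmissible m c) (y : Fin n)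
    (i : ℕ) :
    (y : ℕ) < tailSum (transposeRuns m c) (i + 1) ↔ i < tailSum c ((y : ℕ) + 1) := by
  rw [tailSum_transposeRuns hc]
  exact Fin.lt_card_filter_iff_of_antitone
    (fun _ _ hab h => lt_of_lt_of_le h (tailSum_antitone c (by simpa))) y

lemma IsAdmissible.transpose {c : Fin n → ℕ} (hc : IsAdmissible m c) :
    IsAdmissible n (transposeRuns m c) := by
  refine ⟨by simpa [tailSum_zero] using tailSum_transposeRuns hc 0, fun i hi => ?_⟩
  have hn : 0 < n := by
    rcases Nat.eq_zero_or_pos n with rfl | hn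
    · simpa [← hc.1] using i.isLt
    · exact hn
  refine card_pos.2 ⟨⟨n - 1, by omega⟩, ?_⟩
  simp [hi, tailSum_of_le c (show n ≤ n - 1 + 1 by omega)]

lemma Fin.card_filter_le_val_lt {a b : ℕ} (hb : b ≤ m) :
    #{i : Fin m | a ≤ (i : ℕ) ∧ (i : ℕ) < b} = b - a := by
  have h : ∀ x ∈ Ico a b, x < m := fun x hx => by simp at hx; omega
  rw [← Nat.card_Ico, ← card_attachFin _ h]
  congr 1
  ext i
  simp [mem_attachFin]

theorem transposeRuns_transposeRuns {c : Fin n → ℕ} (hc : IsAdmissible m c) :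
    transposeRuns n (transposeRuns m c) = c := by
  funext y
  have hm : tailSum c 0 = m := by rw [tailSum_zero, hc.1]
  have key : ∀ i : Fin m, tailSum (transposeRuns m c) (i + 1) = y ↔
      tailSum c ((y : ℕ) + 1) ≤ i ∧ (i : ℕ) < tailSum c y := by
    intro i
    have hy := lt_tailSum_transposeRuns_iff hc y i
    rcases y with ⟨_ | y, hy⟩
    · have := i.isLt
      simp only [zero_add] at *
      omega
    · have hy' := lt_tailSum_transposeRuns_iff hc ⟨y, by omega⟩ i
      simp only at *
      omega
  simp only [transposeRuns, key]
  rw [Fin.card_filter_le_val_lt (hm ▸ tailSum_antitone c (Nat.zero_le _)), tailSum_eq_add c y]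
  omega

end Runs

/-- The heights of the east-south corners of the path. -/
def corners {n : ℕ} (c : Fin n → ℕ) : Finset (Fin n) := {y | (y : ℕ) ≠ 0 ∧ 0 < c y}

/-- The `x`-coordinate of the corner at height `y` (reduced mod `m`, which matters only off
`corners c`). -/
def cornerMap {n : ℕ} (m : ℕ) [NeZero m] (c : Fin n → ℕ) (y : Fin n) : Fin m :=
  Fin.ofNat m (tailSum c y)

section Corners

variable {n m : ℕ} [NeZero m] {c : Fin n → ℕ}

lemma IsAdmissible.mapsTo_cornerMap (hc : IsAdmissible m c) :
    Set.MapsTo (cornerMap m c) (corners c) (corners (transposeRuns m c)) := by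
  intro y hy
  simp only [corners, coe_filter, mem_univ, true_and, Set.mem_ofPred_eq] at hy ⊢
  obtain ⟨hy0, hcy⟩ := hy
  have hval : (cornerMap m c y : ℕ) = tailSum c y := Nat.mod_eq_of_lt (hc.tailSum_lt hy0)
  refine ⟨by have := tailSum_eq_add c y; omega, card_pos.2 ⟨⟨y - 1, by omega⟩, ?_⟩⟩
  simp [hval, Nat.sub_add_cancel (Nat.one_le_iff_ne_zero.2 hy0)]

lemma IsAdmissible.leftInvOn_cornerMap [NeZero n] (hc : IsAdmissible m c) :
    Set.LeftInvOn (cornerMap n (transposeRuns m c)) (cornerMap m c) (corners c) := by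
  intro y hy
  simp only [corners, coe_filter, mem_univ, true_and, Set.mem_ofPred_eq] at hy
  obtain ⟨hy0, hcy⟩ := hy
  have hval : (cornerMap m c y : ℕ) = tailSum c y := Nat.mod_eq_of_lt (hc.tailSum_lt hy0)
  have hpos : 0 < tailSum c y := by have := tailSum_eq_add c y; omega
  apply Fin.ext
  rw [cornerMap, hval, ← Nat.sub_add_cancel hpos, tailSum_transposeRuns hc,
    Nat.sub_add_cancel hpos]
  have : univ.filter (fun y' : Fin n => tailSum c y ≤ tailSum c ((y' : ℕ) + 1)) = Iio y := by
    ext y'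
    simp only [mem_filter, mem_univ, true_and, mem_Iio, tailSum_le_tailSum_iff hcy, Fin.lt_def]
    omega
  rw [this, Fin.card_Iio]
  exact Nat.mod_eq_of_lt y.isLt

lemma IsAdmissible.invOn_cornerMap [NeZero n] (hc : IsAdmissible m c) :
    Set.InvOn (cornerMap n (transposeRuns m c)) (cornerMap m c)
      (corners c) (corners (transposeRuns m c)) := by
  refine ⟨hc.leftInvOn_cornerMap, ?_⟩
  simpa only [transposeRuns_transposeRuns hc] using hc.transpose.leftInvOn_cornerMap

end Corners

def powersetCardEquivOfInvOn {α β : Type*} [DecidableEq α] [DecidableEq β] {f : α → β}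
    {g : β → α} {s : Finset α} {t : Finset β} (hf : Set.MapsTo f s t) (hg : Set.MapsTo g t s)
    (hfg : Set.InvOn g f s t) (j : ℕ) : powersetCard j s ≃ powersetCard j t where
  toFun A := ⟨A.1.image f, by
    obtain ⟨hAs, hAj⟩ := mem_powersetCard.1 A.2
    exact mem_powersetCard.2 ⟨image_subset_iff.2 fun a ha => hf (hAs ha),
      (card_image_of_injOn (hfg.1.injOn.mono (coe_subset.2 hAs))).trans hAj⟩⟩
  invFun B := ⟨B.1.image g, by
    obtain ⟨hBt, hBj⟩ := mem_powersetCard.1 B.2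
    exact mem_powersetCard.2 ⟨image_subset_iff.2 fun b hb => hg (hBt hb),
      (card_image_of_injOn (hfg.2.injOn.mono (coe_subset.2 hBt))).trans hBj⟩⟩
  left_inv A := Subtype.ext <| coe_injective <| by
    push_cast
    exact (hfg.1.mono (coe_subset.2 (mem_powersetCard.1 A.2).1)).image_image
  right_inv B := Subtype.ext <| coe_injective <| by
    push_cast
    exact (hfg.2.mono (coe_subset.2 (mem_powersetCard.1 B.2).1)).image_image

def admissibleTransposeEquiv (n m : ℕ) :
    {c : Fin n → ℕ // IsAdmissible m c} ≃ {v : Fin m → ℕ // IsAdmissible n v} where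
  toFun c := ⟨transposeRuns m c, IsAdmissible.transpose c.2⟩
  invFun v := ⟨transposeRuns n v, IsAdmissible.transpose v.2⟩
  left_inv c := by
    ext1
    exact transposeRuns_transposeRuns c.2
  right_inv v := by
    ext1
    exact transposeRuns_transposeRuns v.2

def markedTransposeEquiv (n m j : ℕ) [NeZero n] [NeZero m] :
    (Σ c : {c : Fin n → ℕ // IsAdmissible m c}, powersetCard j (corners c.1)) ≃
      Σ v : {v : Fin m → ℕ // IsAdmissible n v}, powersetCard j (corners v.1) :=
  Equiv.sigmaCongr (admissibleTransposeEquiv n m) fun c =>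
    powersetCardEquivOfInvOn c.2.mapsTo_cornerMap
      (by simpa only [transposeRuns_transposeRuns c.2] using c.2.transpose.mapsTo_cornerMap)
      c.2.invOn_cornerMap j

section Encodings

lemma sum_eq_add_sum_val_ne_zero {n : ℕ} [NeZero n] (f : Fin n → ℕ) :
    ∑ y, f y = f 0 + ∑ y ∈ univ.filter (fun y : Fin n => (y : ℕ) ≠ 0), f y := by
  simp only [Fin.val_ne_zero_iff, filter_ne']
  exact (add_sum_erase _ _ (mem_univ 0)).symm

lemma corners_subset_erase_zero {n : ℕ} [NeZero n] (c : Fin n → ℕ) :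
    corners c ⊆ univ.erase 0 := fun y hy => by
  simpa [corners, Fin.val_ne_zero_iff] using (mem_filter.1 hy).2.1

def marks {n : ℕ} (a : Fin n → ℕ) : Finset (Fin n) := {y | (y : ℕ) ≠ 0 ∧ a y = 1}

/-- The horizontal runs of the path in `P_{k,n}` whose east steps off the bottom line lie on the
heights in `A`. -/
def markedRuns {n : ℕ} (A : Finset (Fin n)) : Fin n → ℕ :=
  fun y => if (y : ℕ) = 0 ∨ y ∈ A then 1 else 0

variable {n m k l : ℕ}

lemma sum_markedRuns_of_val_ne_zero {A : Finset (Fin n)} (hA : ∀ y ∈ A, (y : ℕ) ≠ 0) :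
    ∑ y ∈ univ.filter (fun y : Fin n => (y : ℕ) ≠ 0), markedRuns A y = #A := by
  have : ∀ y ∈ univ.filter (fun y : Fin n => (y : ℕ) ≠ 0),
      markedRuns A y = if y ∈ A then 1 else 0 := fun y hy => by
    simp [markedRuns, (mem_filter.1 hy).2]
  rw [sum_congr rfl this, sum_boole, Nat.cast_id, filter_filter]
  congr 1
  ext y
  simpa using fun hy => hA y hy

lemma sum_fst_of_mem_pathVecPairs [NeZero n] (hk : 1 ≤ k) {p : (Fin n → ℕ) × (Fin n → ℕ)}
    (hp : p ∈ pathVecPairs n k l) : ∑ y, p.1 y = k := by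
  rw [sum_eq_add_sum_val_ne_zero, hp.2.2.1, hp.1 0 rfl]
  omega

lemma markedRuns_marks {p : (Fin n → ℕ) × (Fin n → ℕ)} (hp : p ∈ pathVecPairs n k l) :
    markedRuns (marks p.1) = p.1 := by
  funext y
  by_cases hy : (y : ℕ) = 0
  · simp [markedRuns, marks, hy, hp.1 y hy]
  · have := hp.2.1 y hy
    simp only [markedRuns, marks, hy, mem_filter, mem_univ, true_and, ne_eq, not_false_eq_true,
      false_or]
    split_ifs <;> omega

lemma IsAdmissible.add_of_mem_pathVecPairs [NeZero n] (hkl : k + l = m) (hk : 1 ≤ k)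
    {p : (Fin n → ℕ) × (Fin n → ℕ)} (hp : p ∈ pathVecPairs n k l) :
    IsAdmissible m (p.1 + p.2) := by
  refine ⟨?_, fun y hy => ?_⟩
  · simp only [Pi.add_apply, sum_add_distrib, sum_fst_of_mem_pathVecPairs hk hp, hp.2.2.2, hkl]
  · have := hp.1 y hy
    simp only [Pi.add_apply]
    omega

lemma marks_mem_powersetCard {p : (Fin n → ℕ) × (Fin n → ℕ)}
    (hp : p ∈ pathVecPairs n k l) :
    marks p.1 ∈ powersetCard (k - 1) (corners (p.1 + p.2)) := by
  refine mem_powersetCard.2 ⟨fun y hy => ?_, ?_⟩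
  · simp only [corners, marks, mem_filter, mem_univ, true_and, Pi.add_apply] at hy ⊢
    omega
  · rw [← sum_markedRuns_of_val_ne_zero fun y hy => (mem_filter.1 hy).2.1, markedRuns_marks hp,
      hp.2.2.1]

lemma markedRuns_le {c : Fin n → ℕ} (hc : IsAdmissible m c) {A : Finset (Fin n)}
    (hA : A ⊆ corners c) (y : Fin n) : markedRuns A y ≤ c y := by
  unfold markedRuns
  split_ifs with h
  · rcases h with h | h
    · exact hc.2 y h
    · exact (mem_filter.1 (hA h)).2.2
  · exact Nat.zero_le _

lemma markedRuns_mem_pathVecPairs [NeZero n] (hkl : k + l = m) (hk : 1 ≤ k) {c : Fin n → ℕ}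
    (hc : IsAdmissible m c) {A : Finset (Fin n)} (hA : A ∈ powersetCard (k - 1) (corners c)) :
    (markedRuns A, c - markedRuns A) ∈ pathVecPairs n k l := by
  obtain ⟨hAc, hAk⟩ := mem_powersetCard.1 hA
  have hA0 : ∀ y ∈ A, (y : ℕ) ≠ 0 := fun y hy => (mem_filter.1 (hAc hy)).2.1
  refine ⟨fun y hy => by simp [markedRuns, hy], fun y _ => ?_,
    (sum_markedRuns_of_val_ne_zero hA0).trans hAk, ?_⟩
  · show markedRuns A y ≤ 1
    unfold markedRuns
    split_ifs <;> simp
  have hsum : ∑ y, markedRuns A y = k := by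
    rw [sum_eq_add_sum_val_ne_zero, sum_markedRuns_of_val_ne_zero hA0, hAk]
    simp only [markedRuns, Fin.val_zero, true_or, if_true]
    omega
  simp only [Pi.sub_apply]
  rw [sum_tsub_distrib _ fun y _ => markedRuns_le hc hAc y, hc.1, hsum]
  omega

/-- A path `ν ∈ P_{k,n}` with a vector `r` is the admissible path with horizontal runs
`a(ν) + r` together with the `k - 1` corners at the heights of the east steps of `ν`. -/
def pathVecPairsEquiv [NeZero n] (hkl : k + l = m) (hk : 1 ≤ k) :
    pathVecPairs n k l ≃
      Σ c : {c : Fin n → ℕ // IsAdmissible m c}, powersetCard (k - 1) (corners c.1) where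
  toFun p := ⟨⟨p.1.1 + p.1.2, IsAdmissible.add_of_mem_pathVecPairs hkl hk p.2⟩,
    ⟨marks p.1.1, marks_mem_powersetCard p.2⟩⟩
  invFun q := ⟨(markedRuns q.2.1, q.1.1 - markedRuns q.2.1),
    markedRuns_mem_pathVecPairs hkl hk q.1.2 q.2.2⟩
  left_inv p := by
    obtain ⟨⟨a, r⟩, hp⟩ := p
    have ha : markedRuns (marks a) = a := markedRuns_marks hp
    ext y
    · exact congrFun ha y
    · show a y + r y - markedRuns (marks a) y = r y
      rw [ha]
      omega
  right_inv q := by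
    obtain ⟨⟨c, hc⟩, A, hA⟩ := q
    have hAc := (mem_powersetCard.1 hA).1
    refine Sigma.subtype_ext (Subtype.ext ?_) ?_
    · funext y
      simp only [Pi.add_apply, Pi.sub_apply]
      have := markedRuns_le hc hAc y
      omega
    · ext y
      simp only [marks, markedRuns]
      have := fun h : y ∈ A => (mem_filter.1 (hAc h)).2.1
      by_cases hy : (y : ℕ) = 0 <;> by_cases hyA : y ∈ A <;> simp_all

end Encodings

section VecSubset

variable {n m k l : ℕ}

lemma subset_erase_zero_iff [NeZero m] {I : Finset (Fin m)} :
    I ⊆ univ.erase 0 ↔ ∀ i ∈ I, (i : ℕ) ≠ 0 := by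
  simp [subset_iff]

lemma IsAdmissible.of_mem_vecSubsetPairs (hkl : k + l = m) (hkn : k ≤ n)
    {q : (Fin m → ℕ) × Finset (Fin m)} (hq : q ∈ vecSubsetPairs m n k l) :
    IsAdmissible n fun i => q.1 i + 1 - if i ∈ q.2 then 1 else 0 := by
  refine ⟨?_, fun i hi => ?_⟩
  · rw [sum_tsub_distrib _ fun i _ => by split_ifs <;> omega, sum_add_distrib]
    simp only [sum_const, card_univ, Fintype.card_fin, smul_eq_mul, mul_one, sum_boole,
      Nat.cast_id, filter_mem_eq_inter, univ_inter, hq.1, hq.2.2]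
    omega
  · have : i ∉ q.2 := fun h => hq.2.1 i h hi
    simp [this]

lemma erase_zero_sdiff_mem_powersetCard [NeZero m] (hkl : k + l = m)
    {q : (Fin m → ℕ) × Finset (Fin m)} (hq : q ∈ vecSubsetPairs m n k l) :
    univ.erase 0 \ q.2 ∈
      powersetCard (k - 1) (corners fun i => q.1 i + 1 - if i ∈ q.2 then 1 else 0) := by
  refine mem_powersetCard.2 ⟨fun i hi => ?_, ?_⟩
  · obtain ⟨hi0, hiq⟩ := mem_sdiff.1 hi
    simp [corners, ne_of_mem_erase hi0, hiq]
  · rw [card_sdiff_of_subset (subset_erase_zero_iff.2 hq.2.1), card_erase_of_mem (mem_univ 0),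
      card_univ, Fintype.card_fin, hq.2.2]
    omega

lemma one_le_add_ite_mem_erase_zero_sdiff [NeZero m] {v : Fin m → ℕ} (hv : IsAdmissible n v)
    {J : Finset (Fin m)} (hJ : J ⊆ corners v) (i : Fin m) :
    1 ≤ v i + if i ∈ univ.erase 0 \ J then 1 else 0 := by
  split_ifs with h
  · omega
  · rcases eq_or_ne i 0 with rfl | hi
    · exact hv.2 0 rfl
    · exact (mem_filter.1 (hJ (by simpa [hi] using h))).2.2

lemma mem_vecSubsetPairs_of_mem_powersetCard [NeZero m] (hkl : k + l = m) (hk : 1 ≤ k)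
    {v : Fin m → ℕ} (hv : IsAdmissible n v) {J : Finset (Fin m)}
    (hJ : J ∈ powersetCard (k - 1) (corners v)) :
    (fun i => v i + (if i ∈ univ.erase 0 \ J then 1 else 0) - 1, univ.erase 0 \ J) ∈
      vecSubsetPairs m n k l := by
  obtain ⟨hJv, hJk⟩ := mem_powersetCard.1 hJ
  have hcard : #(univ.erase 0 \ J) = l := by
    rw [card_sdiff_of_subset (hJv.trans (corners_subset_erase_zero v)),
      card_erase_of_mem (mem_univ 0), card_univ, Fintype.card_fin, hJk]
    omega
  refine ⟨?_, subset_erase_zero_iff.1 sdiff_subset, hcard⟩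
  simp only
  rw [sum_tsub_distrib _ fun i _ => one_le_add_ite_mem_erase_zero_sdiff hv hJv i,
    sum_add_distrib]
  simp only [sum_const, card_univ, Fintype.card_fin, smul_eq_mul, mul_one, sum_boole,
    Nat.cast_id, filter_mem_eq_inter, univ_inter, hv.1, hcard]
  omega

/-- A pair `(s, I)` is the admissible path with vertical runs `s + 1 - ε_I` together with the
`k - 1` corners on the lines `x = i` for `i ∈ [2, m] \ I`. -/
def vecSubsetPairsEquiv [NeZero m] (hkl : k + l = m) (hk : 1 ≤ k) (hkn : k ≤ n) :
    vecSubsetPairs m n k l ≃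
      Σ v : {v : Fin m → ℕ // IsAdmissible n v}, powersetCard (k - 1) (corners v.1) where
  toFun q := ⟨⟨fun i => q.1.1 i + 1 - (if i ∈ q.1.2 then 1 else 0),
    IsAdmissible.of_mem_vecSubsetPairs hkl hkn q.2⟩,
    ⟨univ.erase 0 \ q.1.2, erase_zero_sdiff_mem_powersetCard hkl q.2⟩⟩
  invFun w := ⟨(fun i => w.1.1 i + (if i ∈ univ.erase 0 \ w.2.1 then 1 else 0) - 1,
    univ.erase 0 \ w.2.1), mem_vecSubsetPairs_of_mem_powersetCard hkl hk w.1.2 w.2.2⟩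
  left_inv q := by
    obtain ⟨⟨s, I⟩, hq⟩ := q
    have hI : univ.erase 0 \ (univ.erase 0 \ I) = I :=
      Finset.sdiff_sdiff_eq_self (subset_erase_zero_iff.2 hq.2.1)
    ext i
    · show s i + 1 - (if i ∈ I then 1 else 0) +
        (if i ∈ univ.erase 0 \ (univ.erase 0 \ I) then 1 else 0) - 1 = s i
      rw [hI]
      split_ifs <;> omega
    · show i ∈ univ.erase 0 \ (univ.erase 0 \ I) ↔ i ∈ I
      rw [hI]
  right_inv w := by
    obtain ⟨⟨v, hv⟩, J, hJ⟩ := w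
    have hJ' : univ.erase 0 \ (univ.erase 0 \ J) = J :=
      Finset.sdiff_sdiff_eq_self (((mem_powersetCard.1 hJ).1).trans (corners_subset_erase_zero v))
    refine Sigma.subtype_ext (Subtype.ext (funext fun i => ?_)) hJ'
    have := one_le_add_ite_mem_erase_zero_sdiff hv (mem_powersetCard.1 hJ).1 i
    show v i + (if i ∈ univ.erase 0 \ J then 1 else 0) - 1 + 1 -
      (if i ∈ univ.erase 0 \ J then 1 else 0) = v i
    omega

end VecSubset

lemma prod_pow_add_one_sub_ite {ι K : Type*} [Fintype ι] [DecidableEq ι] [CommGroupWithZero K]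
    {x : ι → K} (hx : ∀ i, x i ≠ 0) (s : ι → ℕ) (I : Finset ι) :
    ∏ i, x i ^ (s i + 1 - if i ∈ I then 1 else 0) =
      (∏ i, x i) * (∏ i, x i ^ s i) * ∏ i ∈ I, (x i)⁻¹ := by
  have h : ∀ i, x i ^ (s i + 1 - if i ∈ I then 1 else 0) =
      x i * x i ^ s i * if i ∈ I then (x i)⁻¹ else 1 := fun i => by
    split_ifs
    · rw [Nat.add_sub_cancel, mul_comm (x i), mul_inv_cancel_right₀ (hx i)]
    · rw [Nat.sub_zero, pow_succ', mul_one]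
  rw [Fintype.prod_congr _ _ h, prod_mul_distrib, prod_mul_distrib, prod_ite_mem, univ_inter]

theorem extended_delta_stmt15_general (m n k l : ℕ)
    (hl : l < m) (hk : k = m - l) (hkn : k ≤ n) :
    (∃ e : pathVecPairs n k l ≃ vecSubsetPairs m n k l,
      ∀ (p : pathVecPairs n k l) (i : Fin m),
        (e p).val.1 i + 1 - (if i ∈ (e p).val.2 then 1 else 0) =
          (Finset.univ.filter (fun y : Fin n =>
            (∑ t ∈ Finset.univ.filter (fun t : Fin n => y < t),
              (p.val.1 t + p.val.2 t)) = (i : ℕ))).card) ∧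
    (∀ (K : Type) [Field K] (x : Fin m → K), (∀ i, x i ≠ 0) →
      ∑ s ∈ Finset.Nat.antidiagonalTuple m (n - k),
        ∑ I ∈ Finset.powersetCard l (Finset.univ.filter (fun i : Fin m => (i : ℕ) ≠ 0)),
          ∏ i, x i ^ (s i + 1 - (if i ∈ I then 1 else 0)) =
      (∏ i, x i) *
        (∑ s ∈ Finset.Nat.antidiagonalTuple m (n - k), ∏ i, x i ^ s i) *
        (∑ I ∈ Finset.powersetCard l (Finset.univ.filter (fun i : Fin m => (i : ℕ) ≠ 0)),
          ∏ i ∈ I, (x i)⁻¹)) := by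
  have hkl : k + l = m := by omega
  have hk1 : 1 ≤ k := by omega
  have : NeZero n := ⟨by omega⟩
  have : NeZero m := ⟨by omega⟩
  refine ⟨?_, fun K _ x hx => ?_⟩
  · set e₁ := pathVecPairsEquiv (n := n) (l := l) hkl hk1
    set e₂ := vecSubsetPairsEquiv (n := n) hkl hk1 hkn
    set τ := markedTransposeEquiv n m (k - 1)
    refine ⟨e₁.trans (τ.trans e₂.symm), fun p i => ?_⟩
    -- `e₂` reads off the vertical runs `s + 1 - ε_I`, and `τ` transposes `a(ν) + r` into them.
    exact congrArg (fun w => w.1.1 i) (e₂.apply_symm_apply (τ (e₁ p)))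
  · rw [mul_sum (Nat.antidiagonalTuple m (n - k)), sum_mul_sum]
    exact sum_congr rfl fun s _ => sum_congr rfl fun I _ => prod_pow_add_one_sub_ite hx s I

/-- The two index sets of the proof of Theorem 4.1 are in bijection: both encode an
admissible path `γ` from `(0,n)` to `(m,0)` (with `k−1` marked east-south corners);
the path determined by the horizontal-run vector `a + r` has vertical run
`s_i + 1 − (ε_I)_i` on the line `x = i`.  Moreover
`Σ_{|s|=n−k} Σ_{I⊆[2,m],|I|=l} x^{s+(1^m)−ε_I} = x₁⋯x_m · h_{n−k}(x) · e_l(x₂⁻¹,…,x_m⁻¹)`. -/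
theorem extended_delta_stmt15 (m n k l : ℕ) (hm : 1 ≤ m) (hn : 1 ≤ n)
    (hl : l < m) (hk : k = m - l) (hkn : k ≤ n) :
    (∃ e : pathVecPairs n k l ≃ vecSubsetPairs m n k l,
      ∀ (p : pathVecPairs n k l) (i : Fin m),
        (e p).val.1 i + 1 - (if i ∈ (e p).val.2 then 1 else 0) =
          (Finset.univ.filter (fun y : Fin n =>
            (∑ t ∈ Finset.univ.filter (fun t : Fin n => y < t),
              (p.val.1 t + p.val.2 t)) = (i : ℕ))).card) ∧
    (∀ (K : Type) [Field K] (x : Fin m → K), (∀ i, x i ≠ 0) →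
      ∑ s ∈ Finset.Nat.antidiagonalTuple m (n - k),
        ∑ I ∈ Finset.powersetCard l (Finset.univ.filter (fun i : Fin m => (i : ℕ) ≠ 0)),
          ∏ i, x i ^ (s i + 1 - (if i ∈ I then 1 else 0)) =
      (∏ i, x i) *
        (∑ s ∈ Finset.Nat.antidiagonalTuple m (n - k), ∏ i, x i ^ s i) *
        (∑ I ∈ Finset.powersetCard l (Finset.univ.filter (fun i : Fin m => (i : ℕ) ≠ 0)),
          ∏ i ∈ I, (x i)⁻¹)) :=
  extended_delta_stmt15_general m n k l hl hk hkn
end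

section
/- Define h_I(η) = |{(r,s) : 1 ≤ r < s ≤ n, r ∈ I, s ∉ I, η_s = η_r + 1}| for η ∈ Z^n and I ⊆ [n]. Let m ≥ 1, a ∈ N^{m-1}, τ ∈ N^m, J ⊆ [m−1], and let α = α_{aτ} ∈ N^N (N = m + |τ|) be the sequence from the block construction (blocks (a_{i-1}+1,…,a_{i-1}+τ_i, a_i), with a_0 = 0, a_m = 0). Set I = J↑ = {j + τ_1 + ⋯ + τ_j : j ∈ J}. Then h_I(α) = h'_J(a, τ) + h_J(a), where h_J(a) = |{(j,r) : 1 ≤ j < r ≤ m−1, j ∈ J, r ∉ J, a_r = a_j + 1}| and h'_J(a, τ) = |{(j,r) : 1 ≤ j < r ≤ m, j ∈ J, a_j ∈ [a_{r-1}, a_{r-1}+τ_r−1]}| with a_0 = 0. -/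
/-- The sequence `α_{aτ}` (as a list): the concatenation over `i = 1,…,m` of the
blocks `(a_{i-1}+1, …, a_{i-1}+τ_i, a_i)`, with `a_0 = 0` and final entry `0`. -/
def blockAlpha (m : ℕ) (a τ : ℕ → ℕ) : List ℕ :=
  (List.range m).flatMap (fun i =>
    ((List.range (τ (i + 1))).map (fun k => a i + k + 1)) ++
      [if i + 1 = m then 0 else a (i + 1)])

/-- `j↑ = j + τ_1 + ⋯ + τ_j`. -/
def upPos (τ : ℕ → ℕ) (j : ℕ) : ℕ := j + ∑ x ∈ Finset.Icc 1 j, τ x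

namespace ExtDelta17

def blk (m : ℕ) (a τ : ℕ → ℕ) (i : ℕ) : List ℕ :=
  ((List.range (τ (i + 1))).map (fun k => a i + k + 1)) ++
      [if i + 1 = m then 0 else a (i + 1)]

lemma blockAlpha_eq (m : ℕ) (a τ : ℕ → ℕ) :
    blockAlpha m a τ = (List.range m).flatMap (blk m a τ) := rfl

lemma upPos_zero (τ : ℕ → ℕ) : upPos τ 0 = 0 := by simp [upPos]

lemma upPos_succ (τ : ℕ → ℕ) (i : ℕ) : upPos τ (i + 1) = upPos τ i + τ (i + 1) + 1 := by
  unfold upPos; rw [Finset.sum_Icc_succ_top (by omega)]; ring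

lemma upPos_strictMono (τ : ℕ → ℕ) : StrictMono (upPos τ) :=
  strictMono_nat_of_lt_succ fun n => by rw [upPos_succ]; omega

lemma length_blk (m : ℕ) (a τ : ℕ → ℕ) (i : ℕ) : (blk m a τ i).length = τ (i + 1) + 1 := by
  simp [blk]

lemma length_prefix (m : ℕ) (a τ : ℕ → ℕ) (i : ℕ) :
    ((List.range i).flatMap (blk m a τ)).length = upPos τ i := by
  induction i with
  | zero => simp [upPos_zero]
  | succ n ih =>
      rw [List.range_succ, List.flatMap_append, List.length_append, ih, upPos_succ]
      simp [length_blk]; omega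

lemma getD_split (m : ℕ) (a τ : ℕ → ℕ) (i k : ℕ) (hi : i < m) (hk : k < (blk m a τ i).length) :
    (blockAlpha m a τ).getD (upPos τ i + k) 0 = (blk m a τ i).getD k 0 := by
  obtain ⟨d, rfl⟩ : ∃ d, m = i + (d + 1) := ⟨m - i - 1, by omega⟩
  rw [blockAlpha_eq, List.range_add, List.flatMap_append,
      List.getD_append_right _ _ _ _ (by rw [length_prefix]; omega),
      length_prefix, Nat.add_sub_cancel_left]
  rw [List.range_succ_eq_map, List.map_cons, List.flatMap_cons]
  rw [List.getD_append _ _ _ _ (by simpa using hk)]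
  simp

lemma getD_interior (m : ℕ) (a τ : ℕ → ℕ) (i k : ℕ) (hi : i < m) (hk : k < τ (i + 1)) :
    (blockAlpha m a τ).getD (upPos τ i + k) 0 = a i + k + 1 := by
  rw [getD_split m a τ i k hi (by rw [length_blk]; omega)]
  unfold blk
  rw [List.getD_append _ _ _ _ (by simpa using hk),
      List.getD_eq_getElem _ _ (by simpa using hk)]
  simp

lemma getD_end (m : ℕ) (a τ : ℕ → ℕ) (i : ℕ) (hi : i < m) :
    (blockAlpha m a τ).getD (upPos τ i + τ (i + 1)) 0 = if i + 1 = m then 0 else a (i + 1) := by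
  rw [getD_split m a τ i _ hi (by rw [length_blk]; omega)]
  unfold blk
  rw [List.getD_append_right _ _ _ _ (by simp)]
  simp

lemma exists_block (m : ℕ) (τ : ℕ → ℕ) (p : ℕ) (hp : p < upPos τ m) :
    ∃ i < m, upPos τ i ≤ p ∧ p < upPos τ (i + 1) := by
  induction m with
  | zero => rw [upPos_zero] at hp; omega
  | succ n ih =>
      by_cases h : p < upPos τ n
      · obtain ⟨i, h1, h2, h3⟩ := ih h; exact ⟨i, by omega, h2, h3⟩
      · exact ⟨n, by omega, by omega, hp⟩

end ExtDelta17

open ExtDelta17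

/-- For `I = J↑`, `h_I(α_{aτ}) = h'_J(a,τ) + h_J(a)`:
`h_I(η) = |{(r,s) : r<s, r∈I, s∉I, η_s = η_r+1}|`,
`h_J(a) = |{(j,r) : j<r≤m−1, j∈J, r∉J, a_r = a_j+1}|`, and
`h'_J(a,τ) = |{(j,r) : j<r≤m, j∈J, a_j ∈ [a_{r−1}, a_{r−1}+τ_r−1]}|` (`a_0 = 0`). -/
theorem extended_delta_stmt17 (m : ℕ) (hm : 1 ≤ m) (a τ : ℕ → ℕ) (ha0 : a 0 = 0)
    (J : Finset ℕ) (hJ : J ⊆ Finset.Icc 1 (m - 1)) :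
    (((Finset.Icc 1 (m + ∑ x ∈ Finset.Icc 1 m, τ x)) ×ˢ
        (Finset.Icc 1 (m + ∑ x ∈ Finset.Icc 1 m, τ x))).filter (fun p =>
          p.1 < p.2 ∧ p.1 ∈ J.image (upPos τ) ∧ p.2 ∉ J.image (upPos τ) ∧
          (blockAlpha m a τ).getD (p.2 - 1) 0 =
            (blockAlpha m a τ).getD (p.1 - 1) 0 + 1)).card =
      (((Finset.Icc 1 m) ×ˢ (Finset.Icc 1 m)).filter (fun p =>
          p.1 < p.2 ∧ p.1 ∈ J ∧
          ((a (p.2 - 1) : ℤ) ≤ (a p.1 : ℤ) ∧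
            (a p.1 : ℤ) ≤ (a (p.2 - 1) : ℤ) + (τ p.2 : ℤ) - 1))).card +
      (((Finset.Icc 1 (m - 1)) ×ˢ (Finset.Icc 1 (m - 1))).filter (fun p =>
          p.1 < p.2 ∧ p.1 ∈ J ∧ p.2 ∉ J ∧ a p.2 = a p.1 + 1)).card := by
  classical
  have hsm := upPos_strictMono τ
  have hN : m + ∑ x ∈ Finset.Icc 1 m, τ x = upPos τ m := rfl
  have hge : ∀ j : ℕ, j ≤ upPos τ j := fun j => Nat.le_add_right _ _
  have hups : ∀ r : ℕ, 1 ≤ r → upPos τ r = upPos τ (r - 1) + τ r + 1 := by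
    intro r hr
    obtain ⟨i, rfl⟩ : ∃ i, r = i + 1 := ⟨r - 1, by omega⟩
    rw [upPos_succ]; simp
  -- value at a block end (1-indexed position upPos τ j)
  have hαend : ∀ j : ℕ, 1 ≤ j → j ≤ m →
      (blockAlpha m a τ).getD (upPos τ j - 1) 0 = if j = m then 0 else a j := by
    intro j h1 h2
    obtain ⟨i, rfl⟩ : ∃ i, j = i + 1 := ⟨j - 1, by omega⟩
    have h3 : upPos τ (i + 1) - 1 = upPos τ i + τ (i + 1) := by rw [upPos_succ]; omega
    rw [h3, getD_end m a τ i (by omega)]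
  -- value at interior position upPos τ (r-1) + k, 1 ≤ k ≤ τ r
  have hαint : ∀ r k : ℕ, 1 ≤ r → r ≤ m → 1 ≤ k → k ≤ τ r →
      (blockAlpha m a τ).getD (upPos τ (r - 1) + k - 1) 0 = a (r - 1) + k := by
    intro r k hr1 hr2 hk1 hk2
    obtain ⟨i, rfl⟩ : ∃ i, r = i + 1 := ⟨r - 1, by omega⟩
    obtain ⟨k', rfl⟩ : ∃ k', k = k' + 1 := ⟨k - 1, by omega⟩
    have h3 : upPos τ (i + 1 - 1) + (k' + 1) - 1 = upPos τ i + k' := by simp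
    rw [h3, getD_interior m a τ i k' (by omega) (by omega)]
    simp only [Nat.add_sub_cancel]
    omega
  set N := m + ∑ x ∈ Finset.Icc 1 m, τ x with hNdef
  set T := ((Finset.Icc 1 N ×ˢ Finset.Icc 1 N).filter (fun p : ℕ × ℕ =>
          p.1 < p.2 ∧ p.1 ∈ J.image (upPos τ) ∧ p.2 ∉ J.image (upPos τ) ∧
          (blockAlpha m a τ).getD (p.2 - 1) 0 =
            (blockAlpha m a τ).getD (p.1 - 1) 0 + 1)) with hT
  set S1 := ((Finset.Icc 1 m ×ˢ Finset.Icc 1 m).filter (fun p : ℕ × ℕ =>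
          p.1 < p.2 ∧ p.1 ∈ J ∧
          ((a (p.2 - 1) : ℤ) ≤ (a p.1 : ℤ) ∧
            (a p.1 : ℤ) ≤ (a (p.2 - 1) : ℤ) + (τ p.2 : ℤ) - 1))) with hS1
  set S2 := ((Finset.Icc 1 (m - 1) ×ˢ Finset.Icc 1 (m - 1)).filter (fun p : ℕ × ℕ =>
          p.1 < p.2 ∧ p.1 ∈ J ∧ p.2 ∉ J ∧ a p.2 = a p.1 + 1)) with hS2
  set f1 : ℕ × ℕ → ℕ × ℕ :=
    fun p => (upPos τ p.1, upPos τ (p.2 - 1) + (a p.1 - a (p.2 - 1)) + 1) with hf1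
  set f2 : ℕ × ℕ → ℕ × ℕ := fun p => (upPos τ p.1, upPos τ p.2) with hf2
  -- basic facts about S1 members
  have hS1mem : ∀ p ∈ S1, 1 ≤ p.1 ∧ p.1 ≤ m - 1 ∧ p.1 < p.2 ∧ p.2 ≤ m ∧ p.1 ∈ J ∧
      a (p.2 - 1) ≤ a p.1 ∧ a p.1 + 1 ≤ a (p.2 - 1) + τ p.2 := by
    intro p hp
    rw [hS1, Finset.mem_filter, Finset.mem_product, Finset.mem_Icc, Finset.mem_Icc] at hp
    obtain ⟨⟨h1, h2⟩, h3, h4, h5, h6⟩ := hp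
    have := hJ h4; rw [Finset.mem_Icc] at this
    refine ⟨this.1, this.2, h3, h2.2, h4, ?_, ?_⟩ <;> omega
  have hS2mem : ∀ p ∈ S2, 1 ≤ p.1 ∧ p.1 < p.2 ∧ p.2 ≤ m - 1 ∧ p.1 ∈ J ∧ p.2 ∉ J ∧
      a p.2 = a p.1 + 1 := by
    intro p hp
    rw [hS2, Finset.mem_filter, Finset.mem_product, Finset.mem_Icc, Finset.mem_Icc] at hp
    exact ⟨hp.1.1.1, hp.2.1, hp.1.2.2, hp.2.2.1, hp.2.2.2.1, hp.2.2.2.2⟩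
  -- the interior position of f1 p lies strictly inside block p.2
  have hf1y : ∀ p ∈ S1, upPos τ (p.2 - 1) < (f1 p).2 ∧ (f1 p).2 < upPos τ p.2 := by
    intro p hp
    obtain ⟨h1, h2, h3, h4, h5, h6, h7⟩ := hS1mem p hp
    simp only [hf1]
    constructor
    · omega
    · rw [hups p.2 (by omega)]; omega
  -- main decomposition
  have key : T = S1.image f1 ∪ S2.image f2 := by
    ext ⟨x, y⟩
    simp only [hT, Finset.mem_filter, Finset.mem_product, Finset.mem_Icc, Finset.mem_union,
      Finset.mem_image]
    constructor
    · rintro ⟨⟨⟨hx1, hx2⟩, hy1, hy2⟩, hlt, hxJ, hyJ, hval⟩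
      obtain ⟨j, hjJ, rfl⟩ := hxJ
      have hjm := hJ hjJ; rw [Finset.mem_Icc] at hjm
      have haj : (blockAlpha m a τ).getD (upPos τ j - 1) 0 = a j := by
        rw [hαend j (by omega) (by omega), if_neg (by omega)]
      rw [haj] at hval
      have hy' : y - 1 < upPos τ m := by omega
      obtain ⟨i, him, hb1, hb2⟩ := exists_block m τ (y - 1) hy'
      rw [upPos_succ] at hb2
      by_cases hkend : y - 1 = upPos τ i + τ (i + 1)
      · -- y is the end of block i+1
        have hyeq : y = upPos τ (i + 1) := by rw [upPos_succ]; omega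
        rw [hkend, getD_end m a τ i him] at hval
        have him' : i + 1 ≠ m := by intro h; rw [if_pos h] at hval; omega
        rw [if_neg him'] at hval
        right
        refine ⟨(j, i + 1), ?_, ?_⟩
        · rw [hS2, Finset.mem_filter, Finset.mem_product, Finset.mem_Icc, Finset.mem_Icc]
          have hjlt : j < i + 1 := by
            have : upPos τ j < upPos τ (i + 1) := by omega
            exact hsm.lt_iff_lt.mp this
          refine ⟨⟨⟨by omega, by omega⟩, by omega, by omega⟩, hjlt, hjJ, ?_, hval⟩
          intro hiJ
          exact hyJ ⟨i + 1, hiJ, hyeq.symm⟩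
        · simp only [hf2, Prod.mk.injEq]; exact ⟨trivial, hyeq.symm⟩
      · -- y is interior in block i+1
        set k := y - 1 - upPos τ i with hk
        have hky : y - 1 = upPos τ i + k := by omega
        have hk2 : k < τ (i + 1) := by omega
        have hint : (blockAlpha m a τ).getD (y - 1) 0 = a i + (k + 1) := by
          have := hαint (i + 1) (k + 1) (by omega) (by omega) (by omega) (by omega)
          simpa [hky] using this
        rw [hint] at hval
        left
        refine ⟨(j, i + 1), ?_, ?_⟩
        · rw [hS1, Finset.mem_filter, Finset.mem_product, Finset.mem_Icc, Finset.mem_Icc]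
          have hjlt : j < i + 1 := by
            have h5 : upPos τ j < upPos τ (i + 1) := by rw [upPos_succ]; omega
            exact hsm.lt_iff_lt.mp h5
          refine ⟨⟨⟨by omega, by omega⟩, by omega, by omega⟩, hjlt, hjJ, ?_, ?_⟩ <;>
            · simp only [Nat.add_sub_cancel]; push_cast; omega
        · simp only [hf1, Prod.mk.injEq, Nat.add_sub_cancel]
          exact ⟨trivial, by omega⟩
    · rintro (⟨p, hp, heq⟩ | ⟨p, hp, heq⟩)
      · -- image of f1
        obtain ⟨h1, h2, h3, h4, h5, h6, h7⟩ := hS1mem p hp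
        obtain ⟨hy1, hy2⟩ := hf1y p hp
        simp only [hf1, Prod.mk.injEq] at heq
        obtain ⟨rfl, rfl⟩ := heq
        simp only [hf1] at hy1 hy2
        have hxN : upPos τ p.1 ≤ upPos τ m := hsm.monotone (by omega)
        have hyN : upPos τ p.2 ≤ upPos τ m := hsm.monotone (by omega)
        have hxy : upPos τ p.1 ≤ upPos τ (p.2 - 1) := hsm.monotone (by omega)
        have hg1 := hge p.1
        refine ⟨⟨⟨by omega, by omega⟩, by omega, by omega⟩, by omega,
          ⟨p.1, h5, rfl⟩, ?_, ?_⟩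
        · rintro ⟨j', hj', hj'eq⟩
          have ha1 : upPos τ (p.2 - 1) < upPos τ j' := by omega
          have ha2 : upPos τ j' < upPos τ p.2 := by omega
          have := hsm.lt_iff_lt.mp ha1
          have := hsm.lt_iff_lt.mp ha2
          omega
        · have hv1 : (blockAlpha m a τ).getD (upPos τ p.1 - 1) 0 = a p.1 := by
            rw [hαend p.1 (by omega) (by omega), if_neg (by omega)]
          have hv2 := hαint p.2 (a p.1 - a (p.2 - 1) + 1) (by omega) (by omega) (by omega)
            (by omega)
          rw [hv1]
          have heq2 : upPos τ (p.2 - 1) + (a p.1 - a (p.2 - 1)) + 1 - 1 =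
              upPos τ (p.2 - 1) + (a p.1 - a (p.2 - 1) + 1) - 1 := by omega
          rw [heq2, hv2]; omega
      · -- image of f2
        obtain ⟨h1, h2, h3, h4, h5, h6⟩ := hS2mem p hp
        simp only [hf2, Prod.mk.injEq] at heq
        obtain ⟨rfl, rfl⟩ := heq
        have hxN : upPos τ p.1 ≤ upPos τ m := hsm.monotone (by omega)
        have hyN : upPos τ p.2 ≤ upPos τ m := hsm.monotone (by omega)
        have hxy : upPos τ p.1 < upPos τ p.2 := hsm h2
        have hg1 := hge p.1
        refine ⟨⟨⟨by omega, by omega⟩, by omega, by omega⟩, hxy,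
          ⟨p.1, h4, rfl⟩, ?_, ?_⟩
        · rintro ⟨j', hj', hj'eq⟩
          exact h5 (hsm.injective hj'eq ▸ hj')
        · rw [hαend p.1 (by omega) (by omega), if_neg (by omega),
              hαend p.2 (by omega) (by omega), if_neg (by omega)]
          exact h6
  -- disjointness
  have hdisj : Disjoint (S1.image f1) (S2.image f2) := by
    rw [Finset.disjoint_left]
    rintro z hz1 hz2
    rw [Finset.mem_image] at hz1 hz2
    obtain ⟨p, hp, hpe⟩ := hz1
    obtain ⟨q, hq, hqe⟩ := hz2
    obtain ⟨hy1, hy2⟩ := hf1y p hp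
    obtain ⟨_, _, _, hq4, _, _⟩ := hS2mem q hq
    have hze : z.2 = upPos τ q.2 := by simp only [← hqe, hf2]
    rw [hpe] at hy1 hy2
    rw [hze] at hy1 hy2
    have := hsm.lt_iff_lt.mp hy1
    have := hsm.lt_iff_lt.mp hy2
    omega
  -- injectivity
  have hinj1 : Set.InjOn f1 S1 := by
    intro p hp q hq heq
    obtain ⟨hp1, hp2, hp3, hp4, _, _, _⟩ := hS1mem p hp
    obtain ⟨hq1, hq2, hq3, hq4, _, _, _⟩ := hS1mem q hq
    obtain ⟨hpy1, hpy2⟩ := hf1y p hp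
    obtain ⟨hqy1, hqy2⟩ := hf1y q hq
    have he1 : (f1 p).1 = (f1 q).1 := by rw [heq]
    have he2 : (f1 p).2 = (f1 q).2 := by rw [heq]
    have h11 : p.1 = q.1 := hsm.injective he1
    have h22 : p.2 = q.2 := by
      by_contra hne
      rcases Nat.lt_or_ge p.2 q.2 with h | h
      · have : upPos τ p.2 ≤ upPos τ (q.2 - 1) := hsm.monotone (by omega)
        omega
      · have : upPos τ q.2 ≤ upPos τ (p.2 - 1) := hsm.monotone (by omega)
        omega
    exact Prod.ext h11 h22
  have hinj2 : Set.InjOn f2 S2 := by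
    intro p hp q hq heq
    have he1 : (f2 p).1 = (f2 q).1 := by rw [heq]
    have he2 : (f2 p).2 = (f2 q).2 := by rw [heq]
    exact Prod.ext (hsm.injective he1) (hsm.injective he2)
  calc T.card = (S1.image f1 ∪ S2.image f2).card := by rw [key]
    _ = (S1.image f1).card + (S2.image f2).card := Finset.card_union_of_disjoint hdisj
    _ = S1.card + S2.card := by
        rw [Finset.card_image_of_injOn hinj1, Finset.card_image_of_injOn hinj2]
end
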